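/- arXiv:1805.04436 — 15 statements merged into one kernel-verified Lean document; each statement's English description precedes it below -/
import Mathlib

section
/- Let X be a finite ground set and f a normalized monotone set function on X, and let d ≥ 0 be an integer. Then f is d-scopic submodular if and only if every supermodular set w.r.t. f has cardinality at most d (i.e., the supermodular width of f is at most d). -/
variable {α : Type*} [Fintype α] [DecidableEq α]

/-- The margin of `S` given `T`: `f(S|T) = f(S ∪ T) - f(T)`. -/
def margin (f : Finset α → ℝ) (S T : Finset α) : ℝ := f (S ∪ T) - f T

/-- A nonempty set `T` is supermodular w.r.t. `f` if there exist `S` and `v ∉ T` such that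
`f({v}|S ∪ T) > f({v}|S ∪ T')` for every proper subset `T' ⊊ T`. -/
def SupermodularSet (f : Finset α → ℝ) (T : Finset α) : Prop :=
  T.Nonempty ∧ ∃ (S : Finset α) (v : α), v ∉ T ∧
    ∀ T' : Finset α, T' ⊂ T → margin f {v} (S ∪ T') < margin f {v} (S ∪ T)

/-- `f` is `d`-scopic submodular: for all `S ⊆ T` and `v ∉ T`,
`f({v}|T) ≤ max_{T' ⊆ T, |T'| ≤ d} f({v}|S ∪ T')`. -/
def ScopicSubmodular (d : ℕ) (f : Finset α → ℝ) : Prop :=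
  ∀ S T : Finset α, S ⊆ T → ∀ v, v ∉ T →
    ∃ T' : Finset α, T' ⊆ T ∧ T'.card ≤ d ∧ margin f {v} T ≤ margin f {v} (S ∪ T')

/-!
For `S ⊆ T` and `v ∉ T`, descending from `T` through proper subsets that do not lower
`f({v}|S ∪ ·)` ends at a set `T₁` beaten strictly by none of its proper subsets: `T₁` is empty
or supermodular, so it is a scope of size at most `sm(f)`. Conversely, if `T` is supermodular
with witness `S, v`, a scope `T'` for `S ⊆ S ∪ T` can only matter through `T' ∩ T`, and the
strict inequalities force `T ⊆ T'`, so `|T| ≤ d`.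
-/

theorem Finset.exists_subset_le_apply_and_forall_ssubset_lt {ι β : Type*} [LinearOrder β]
    (g : Finset ι → β) (T : Finset ι) :
    ∃ T₁ ⊆ T, g T ≤ g T₁ ∧ ∀ T' ⊂ T₁, g T' < g T₁ := by
  induction T using Finset.strongInduction with
  | H T ih =>
    by_cases hT : ∀ T' ⊂ T, g T' < g T
    · exact ⟨T, subset_rfl, le_rfl, hT⟩
    · push Not at hT
      obtain ⟨T', hT'T, hle⟩ := hT
      obtain ⟨T₁, hT₁T', hle₁, hlt₁⟩ := ih T' hT'T
      exact ⟨T₁, hT₁T'.trans hT'T.subset, hle.trans hle₁, hlt₁⟩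

section

variable {ι : Type*} [DecidableEq ι] {f : Finset ι → ℝ} {d : ℕ}

theorem margin_singleton_eq_zero_of_mem {v : ι} {A : Finset ι}
    (hv : v ∈ A) : margin f {v} A = 0 := by
  rw [margin, Finset.singleton_union, Finset.insert_eq_of_mem hv, sub_self]

theorem SupermodularSet.card_le {T : Finset ι}
    (hT : SupermodularSet f T) (hf : ScopicSubmodular d f) : T.card ≤ d := by
  obtain ⟨hne, S, v, hvT, hlt⟩ := hT
  have hvS : v ∉ S := fun hvS => by
    simpa [margin_singleton_eq_zero_of_mem, hvS] using hlt ∅ (Finset.empty_ssubset.mpr hne)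
  obtain ⟨T', hT'ST, hT'd, hle⟩ :=
    hf S (S ∪ T) Finset.subset_union_left v (by simp [hvS, hvT])
  have hTT' : T ⊆ T' := by
    by_contra hTT'
    have hS : S ∪ (T' ∩ T) = S ∪ T' := by
      ext x
      have := @hT'ST x
      simp only [Finset.mem_union, Finset.mem_inter] at this ⊢
      tauto
    have := hlt (T' ∩ T) (Finset.inter_subset_right.ssubset_of_ne
      fun h => hTT' (h ▸ Finset.inter_subset_left))
    rw [hS] at this
    linarith
  exact (Finset.card_le_card hTT').trans hT'd

theorem ScopicSubmodular.of_forall_supermodularSet_card_le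
    (h : ∀ T, SupermodularSet f T → T.card ≤ d) : ScopicSubmodular d f := by
  intro S T hST v hvT
  obtain ⟨T₁, hT₁T, hle, hlt⟩ :=
    Finset.exists_subset_le_apply_and_forall_ssubset_lt (fun T' => margin f {v} (S ∪ T')) T
  refine ⟨T₁, hT₁T, ?_, by simpa [Finset.union_eq_right.mpr hST] using hle⟩
  rcases T₁.eq_empty_or_nonempty with rfl | hne
  · simp
  · exact h T₁ ⟨hne, S, v, fun hv => hvT (hT₁T hv), hlt⟩

end

theorem scopic_submodular_iff_supermodular_width_le_general (f : Finset α → ℝ) (d : ℕ) :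
    ScopicSubmodular d f ↔ ∀ T : Finset α, SupermodularSet f T → T.card ≤ d :=
  ⟨fun hf _ hT => hT.card_le hf, ScopicSubmodular.of_forall_supermodularSet_card_le⟩

/-- a normalized monotone set function is `d`-scopic submodular iff every
supermodular set w.r.t. `f` has cardinality at most `d`. -/
theorem scopic_submodular_iff_supermodular_width_le (f : Finset α → ℝ)
    (hnorm : f ∅ = 0) (hmono : ∀ S T : Finset α, S ⊆ T → f S ≤ f T) (d : ℕ) :
    ScopicSubmodular d f ↔ ∀ T : Finset α, SupermodularSet f T → T.card ≤ d :=
  scopic_submodular_iff_supermodular_width_le_general f d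
end

section
/- Let X be a finite ground set and f a normalized monotone set function on X, and let d ≥ 0 be an integer. Then f is d-scopic subadditive if and only if every superadditive set w.r.t. f has cardinality at most d (i.e., the superadditive width of f is at most d). -/
variable {α : Type*} [Fintype α] [DecidableEq α]

/-- A nonempty set `T` is superadditive w.r.t. `f` if there exists `S ⊆ X ∖ T` such that
`f(S|T) > f(S|T')` for every proper subset `T' ⊊ T`. -/
def SuperadditiveSet (f : Finset α → ℝ) (T : Finset α) : Prop :=
  T.Nonempty ∧ ∃ S : Finset α, Disjoint S T ∧
    ∀ T' : Finset α, T' ⊂ T → margin f S T' < margin f S T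

/-- `f` is `d`-scopic subadditive: for all disjoint `S`, `T`,
`f(S|T) ≤ max_{T' ⊆ T, |T'| ≤ d} f(S|T')`. -/
def ScopicSubadditive (d : ℕ) (f : Finset α → ℝ) : Prop :=
  ∀ S T : Finset α, Disjoint S T →
    ∃ T' : Finset α, T' ⊆ T ∧ T'.card ≤ d ∧ margin f S T ≤ margin f S T'

/-- a normalized monotone set function is `d`-scopic subadditive iff every
superadditive set w.r.t. `f` has cardinality at most `d`. -/
theorem scopic_subadditive_iff_superadditive_width_le (f : Finset α → ℝ)
    (hnorm : f ∅ = 0) (hmono : ∀ S T : Finset α, S ⊆ T → f S ≤ f T) (d : ℕ) :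
    ScopicSubadditive d f ↔ ∀ T : Finset α, SuperadditiveSet f T → T.card ≤ d := by
  constructor
  · intro hsc T hT
    obtain ⟨hne, S, hdisj, hsup⟩ := hT
    obtain ⟨T', hT'sub, hT'card, hle⟩ := hsc S T hdisj
    by_cases h : T' = T
    · exact h ▸ hT'card
    · exact absurd hle (not_le.mpr (hsup T' ⟨hT'sub, fun hh => h (subset_antisymm hT'sub hh)⟩))
  · intro hw S T hdisj
    classical
    set P := (T.powerset).filter (fun T' => margin f S T ≤ margin f S T') with hP
    have hTP : T ∈ P := by simp [hP, Finset.mem_filter, Finset.mem_powerset]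
    obtain ⟨T₀, hT₀P, hmin⟩ := Finset.exists_min_image P (fun T' => T'.card) ⟨T, hTP⟩
    rw [hP, Finset.mem_filter, Finset.mem_powerset] at hT₀P
    obtain ⟨hsub, hle⟩ := hT₀P
    refine ⟨T₀, hsub, ?_, hle⟩
    rcases T₀.eq_empty_or_nonempty with h0 | h0
    · simp [h0]
    apply hw
    refine ⟨h0, S, Finset.disjoint_of_subset_right hsub hdisj, fun T' hT' => ?_⟩
    by_contra hge
    push_neg at hge
    have hT'P : T' ∈ P := by
      rw [hP, Finset.mem_filter, Finset.mem_powerset]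
      exact ⟨(hT'.1.trans hsub), hle.trans hge⟩
    exact absurd (hmin T' hT'P) (not_le.mpr (Finset.card_lt_card hT'))
end

section
/- Let X be a finite ground set and f a normalized monotone set function on X. Then f is submodular if and only if f has no supermodular set (i.e., sm(f) = 0). -/
variable {α : Type*} [Fintype α] [DecidableEq α]

/-- `f` is submodular: `f({v}|T) ≤ f({v}|S)` for all `S ⊆ T` and `v ∉ T`. -/
def SubmodularFn (f : Finset α → ℝ) : Prop :=
  ∀ S T : Finset α, S ⊆ T → ∀ v, v ∉ T → margin f {v} T ≤ margin f {v} S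

/-- a normalized monotone set function is submodular iff it has no supermodular
set (i.e. its supermodular width is 0). -/
theorem submodular_iff_no_supermodular_set (f : Finset α → ℝ)
    (hnorm : f ∅ = 0) (hmono : ∀ S T : Finset α, S ⊆ T → f S ≤ f T) :
    SubmodularFn f ↔ ∀ T : Finset α, ¬ SupermodularSet f T := by
  constructor
  · rintro hsub T ⟨⟨t, ht⟩, S, v, hv, hstrict⟩
    have hT' : T.erase t ⊂ T := Finset.erase_ssubset ht
    have hlt := hstrict (T.erase t) hT'
    by_cases hvS : v ∈ S
    · have h1 : {v} ∪ (S ∪ T.erase t) = S ∪ T.erase t := by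
        simp [Finset.union_eq_right.mpr, Finset.singleton_subset_iff,
          Finset.mem_union.mpr (Or.inl hvS)]
      have h2 : {v} ∪ (S ∪ T) = S ∪ T := by
        simp [Finset.union_eq_right.mpr, Finset.singleton_subset_iff,
          Finset.mem_union.mpr (Or.inl hvS)]
      simp [margin, h1, h2] at hlt
    · have hsubset : S ∪ T.erase t ⊆ S ∪ T :=
        Finset.union_subset_union_right (Finset.erase_subset _ _)
      have hvnot : v ∉ S ∪ T := by
        simp [Finset.mem_union, hvS, hv]
      exact absurd (hsub _ _ hsubset v hvnot) (not_le.mpr hlt)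
  · intro hno
    by_contra hnsub
    simp only [SubmodularFn, not_forall, not_le] at hnsub
    obtain ⟨S, T, hST, v, hvT, hlt⟩ := hnsub
    set D := T \ S with hD
    set g : Finset α → ℝ := fun U => margin f {v} (S ∪ U) with hg
    -- maximize g over powerset of D
    obtain ⟨m, hm, hmax⟩ := (D.powerset.image g).exists_max_image id
      ⟨g D, Finset.mem_image_of_mem g (Finset.mem_powerset_self D)⟩
    set M := D.powerset.filter (fun U => g U = m) with hM
    have hMne : M.Nonempty := by
      obtain ⟨U, hU, hgU⟩ := Finset.mem_image.mp hm
      exact ⟨U, Finset.mem_filter.mpr ⟨hU, hgU⟩⟩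
    obtain ⟨Ts, hTs, hmin⟩ := M.exists_min_image Finset.card hMne
    obtain ⟨hTsD, hTsm⟩ := Finset.mem_filter.mp hTs
    have hTsD' : Ts ⊆ D := Finset.mem_powerset.mp hTsD
    have hvTs : v ∉ Ts := fun h => hvT ((Finset.sdiff_subset) (hTsD' h))
    have hgle : ∀ U ⊆ D, g U ≤ m := fun U hU =>
      hmax (g U) (Finset.mem_image_of_mem g (Finset.mem_powerset.mpr hU))
    have hSD : S ∪ D = S ∪ T := by
      simp [hD, Finset.union_sdiff_self_eq_union, Finset.union_eq_right.mpr hST]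
    have hgD : g D = margin f {v} (S ∪ T) := by rw [hg]; simp [hSD]
    have hgempty : g ∅ = margin f {v} S := by simp [hg]
    have hne : Ts.Nonempty := by
      rcases Finset.eq_empty_or_nonempty Ts with h | h
      · exfalso
        have h1 : g D ≤ m := hgle D le_rfl
        rw [← hTsm, h, hgempty, hgD, Finset.union_eq_right.mpr hST] at h1
        exact absurd hlt (not_lt.mpr h1)
      · exact h
    apply hno Ts
    refine ⟨hne, S, v, hvTs, fun T' hT' => ?_⟩
    have hT'D : T' ⊆ D := le_trans hT'.subset hTsD'
    have hle : g T' ≤ m := hgle T' hT'D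
    have hltm : g T' < m := by
      rcases lt_or_eq_of_le hle with h | h
      · exact h
      · exfalso
        have hT'M : T' ∈ M := Finset.mem_filter.mpr ⟨Finset.mem_powerset.mpr hT'D, h⟩
        have := hmin T' hT'M
        exact absurd (Finset.card_lt_card hT') (not_lt.mpr this)
    calc margin f {v} (S ∪ T') = g T' := rfl
      _ < m := hltm
      _ = g Ts := hTsm.symm
      _ = margin f {v} (S ∪ Ts) := rfl
end

section
/- Let X be a finite ground set and f a normalized monotone set function on X. Then f is subadditive if and only if f has no superadditive set (i.e., sa(f) = 0). -/
variable {α : Type*} [Fintype α] [DecidableEq α]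

/-- `f` is subadditive: `f(S ∪ T) ≤ f(S) + f(T)` for all `S`, `T`. -/
def SubadditiveFn (f : Finset α → ℝ) : Prop :=
  ∀ S T : Finset α, f (S ∪ T) ≤ f S + f T

/-- a normalized monotone set function is subadditive iff it has no
superadditive set (i.e. its superadditive width is 0). -/
theorem subadditive_iff_no_superadditive_set (f : Finset α → ℝ)
    (hnorm : f ∅ = 0) (hmono : ∀ S T : Finset α, S ⊆ T → f S ≤ f T) :
    SubadditiveFn f ↔ ∀ T : Finset α, ¬ SuperadditiveSet f T := by
  classical
  constructor
  · intro hsub T hT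
    obtain ⟨hne, S, hdisj, hlt⟩ := hT
    have h1 := hlt ∅ (Finset.empty_ssubset.mpr hne)
    have h2 := hsub S T
    simp only [margin, Finset.union_empty, Finset.empty_union] at h1
    linarith
  · intro hno S T
    -- reduce to the disjoint case
    have hsub : f (S ∪ (T \ S)) ≤ f S + f (T \ S) := by
      by_contra h
      push_neg at h
      set T' := T \ S with hT'
      have hd : Disjoint S T' := Finset.disjoint_sdiff
      -- find max of margin f S over powerset of T'
      obtain ⟨U, hU, hUmax⟩ := T'.powerset.exists_max_image (margin f S)
        ⟨T', Finset.mem_powerset_self _⟩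
      set Q := T'.powerset.filter (fun V => margin f S U ≤ margin f S V) with hQ
      have hUQ : U ∈ Q := Finset.mem_filter.mpr ⟨hU, le_refl _⟩
      obtain ⟨T₀, hT₀Q, hT₀min⟩ := Q.exists_min_image Finset.card ⟨U, hUQ⟩
      obtain ⟨hT₀p, hT₀ge⟩ := Finset.mem_filter.mp hT₀Q
      have hT₀sub : T₀ ⊆ T' := Finset.mem_powerset.mp hT₀p
      have hmax : ∀ V ∈ T'.powerset, margin f S V ≤ margin f S T₀ :=
        fun V hV => le_trans (hUmax V hV) hT₀ge
      have hgtempty : margin f S ∅ < margin f S T₀ := by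
        have h5 := hmax T' (Finset.mem_powerset_self _)
        have h6 : margin f S ∅ < margin f S T' := by
          simp only [margin, Finset.union_empty, hnorm]
          linarith
        linarith
      have hne : T₀.Nonempty := by
        rw [Finset.nonempty_iff_ne_empty]
        rintro rfl
        exact lt_irrefl _ hgtempty
      apply hno T₀
      refine ⟨hne, S, Finset.disjoint_of_subset_right hT₀sub hd, ?_⟩
      intro T₂ hT₂
      have hT₂p : T₂ ∈ T'.powerset :=
        Finset.mem_powerset.mpr (le_trans hT₂.subset hT₀sub)
      have hle : margin f S T₂ ≤ margin f S T₀ := hmax T₂ hT₂p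
      rcases lt_or_eq_of_le hle with h | h
      · exact h
      · exfalso
        have hT₂Q : T₂ ∈ Q := Finset.mem_filter.mpr ⟨hT₂p, by linarith⟩
        have := hT₀min T₂ hT₂Q
        exact absurd (Finset.card_lt_card hT₂) (not_lt.mpr this)
    have h3 : f (S ∪ (T \ S)) = f (S ∪ T) := by rw [Finset.union_sdiff_self_eq_union]
    have h4 : f (T \ S) ≤ f T := hmono _ _ (Finset.sdiff_subset)
    linarith
end

section
/- Let X be a finite ground set and f a normalized monotone set function on X. For every supermodular set T w.r.t. f there exists v ∈ X ∖ T such that T ⊆ Dep⁺(v); consequently, the supermodular width of f is at most the supermodular degree of f, i.e., sm(f) ≤ sd(f). -/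
variable {α : Type*} [Fintype α] [DecidableEq α]

open Classical in
/-- Supermodular width: the maximum cardinality of a supermodular set (0 if none exists). -/
noncomputable def smWidth (f : Finset α → ℝ) : ℕ :=
  Finset.univ.powerset.sup fun T => if SupermodularSet f T then T.card else 0

open Classical in
/-- `Dep⁺(u)`: the set of `v ≠ u` such that `f({u}|S) > f({u}|S ∖ {v})` for some `S`. -/
noncomputable def depPlus (f : Finset α → ℝ) (u : α) : Finset α :=
  Finset.univ.filter fun v => v ≠ u ∧ ∃ S : Finset α, margin f {u} (S \ {v}) < margin f {u} S

/-- Supermodular degree: `sd(f) = max_{u} |Dep⁺(u)|`. -/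
noncomputable def smDegree (f : Finset α → ℝ) : ℕ :=
  Finset.univ.sup fun u : α => (depPlus f u).card

/-- for every supermodular set `T` w.r.t. `f` there is `v ∉ T` with
`T ⊆ Dep⁺(v)`; consequently `sm(f) ≤ sd(f)`. -/
theorem supermodular_width_le_supermodular_degree (f : Finset α → ℝ)
    (hnorm : f ∅ = 0) (hmono : ∀ S T : Finset α, S ⊆ T → f S ≤ f T) :
    (∀ T : Finset α, SupermodularSet f T → ∃ v, v ∉ T ∧ T ⊆ depPlus f v) ∧
      smWidth f ≤ smDegree f := by
  classical
  have key : ∀ T : Finset α, SupermodularSet f T → ∃ v, v ∉ T ∧ T ⊆ depPlus f v := by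
    intro T hT
    obtain ⟨hne, S, v, hv, hlt⟩ := hT
    refine ⟨v, hv, fun u hu => ?_⟩
    have hsub : T \ {u} ⊂ T :=
      Finset.sdiff_ssubset (Finset.singleton_subset_iff.mpr hu) (Finset.singleton_nonempty u)
    have huS : u ∉ S := by
      intro huS
      have h := hlt (T \ {u}) hsub
      have heq : S ∪ (T \ {u}) = S ∪ T := by
        ext x
        simp only [Finset.mem_union, Finset.mem_sdiff, Finset.mem_singleton]
        constructor
        · rintro (h | ⟨h, _⟩) <;> tauto
        · rintro (h | h)
          · tauto
          · by_cases hx : x = u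
            · exact Or.inl (hx ▸ huS)
            · tauto
      rw [heq] at h
      exact lt_irrefl _ h
    simp only [depPlus, Finset.mem_filter, Finset.mem_univ, true_and]
    refine ⟨fun h => hv (h ▸ hu), S ∪ T, ?_⟩
    have heq : (S ∪ T) \ {u} = S ∪ (T \ {u}) := by
      ext x
      simp only [Finset.mem_union, Finset.mem_sdiff, Finset.mem_singleton]
      constructor
      · rintro ⟨h | h, hx⟩ <;> tauto
      · rintro (h | ⟨h1, h2⟩)
        · by_cases hx : x = u
          · exact absurd (hx ▸ h) huS
          · tauto
        · tauto
    rw [heq]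
    exact hlt (T \ {u}) hsub
  refine ⟨key, ?_⟩
  apply Finset.sup_le
  intro T _
  split_ifs with h
  · obtain ⟨v, _, hsub⟩ := key T h
    calc T.card ≤ (depPlus f v).card := Finset.card_le_card hsub
      _ ≤ smDegree f := Finset.le_sup (f := fun u => (depPlus f u).card) (Finset.mem_univ v)
  · exact Nat.zero_le _
end

section
/- Let X be a finite ground set with m ≥ 2 elements and define the set function f on X by f(S) = 0 if |S| ≤ 1 and f(S) = 1 if |S| ≥ 2. Then f is normalized and monotone, its supermodular width satisfies sm(f) = 1, and its supermodular degree satisfies sd(f) = m − 1. -/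
variable {α : Type*} [Fintype α] [DecidableEq α]

/-! For monotone `f` every margin is nonnegative, so a supermodular set `T` (comparing with
`T' = ∅`) has a positive margin `f({v} | S ∪ T)`. For the threshold function all margins over
sets of size at least two vanish, so only singletons are supermodular, and `{w}` is one since
adding `v ≠ w` to it raises `f` from 0 to 1. The same jump shows that every `v ≠ u` lies in
`Dep⁺(u)`, so the supermodular degree is `m - 1`. -/

omit [Fintype α] in
theorem margin_nonneg_of_monotone {f : Finset α → ℝ} (hf : Monotone f) (S T : Finset α) :
    0 ≤ margin f S T :=
  sub_nonneg.mpr (hf Finset.subset_union_right)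

omit [Fintype α] in
theorem SupermodularSet.exists_margin_pos {f : Finset α → ℝ} (hf : Monotone f) {T : Finset α}
    (hT : SupermodularSet f T) : ∃ (S : Finset α) (v : α), 0 < margin f {v} (S ∪ T) := by
  obtain ⟨hne, S, v, -, hlt⟩ := hT
  exact ⟨S, v, (margin_nonneg_of_monotone hf _ _).trans_lt
    (hlt ∅ (Finset.empty_ssubset.mpr hne))⟩

theorem smWidth_le {f : Finset α → ℝ} {k : ℕ} (h : ∀ T, SupermodularSet f T → T.card ≤ k) :
    smWidth f ≤ k := by
  refine Finset.sup_le fun T _ => ?_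
  split_ifs with hT
  exacts [h T hT, k.zero_le]

theorem SupermodularSet.card_le_smWidth {f : Finset α → ℝ} {T : Finset α}
    (hT : SupermodularSet f T) : T.card ≤ smWidth f := by
  unfold smWidth
  refine le_trans ?_ (Finset.le_sup (Finset.mem_powerset.mpr (Finset.subset_univ T)))
  rw [if_pos hT]

theorem smDegree_eq_of_forall_card_depPlus [Nonempty α] {f : Finset α → ℝ} {k : ℕ}
    (h : ∀ u, (depPlus f u).card = k) : smDegree f = k := by
  unfold smDegree
  simp_rw [h]
  exact Finset.sup_const Finset.univ_nonempty k

def thresholdTwo (S : Finset α) : ℝ := if S.card ≤ 1 then 0 else 1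

omit [Fintype α] [DecidableEq α] in
theorem thresholdTwo_monotone : Monotone (thresholdTwo (α := α)) := by
  intro S T hST
  have := Finset.card_le_card hST
  unfold thresholdTwo
  split_ifs <;> first | omega | norm_num

omit [Fintype α] in
theorem margin_thresholdTwo_of_two_le_card (S : Finset α) {W : Finset α} (hW : 2 ≤ W.card) :
    margin thresholdTwo S W = 0 := by
  have hSW : 2 ≤ (S ∪ W).card := hW.trans (Finset.card_le_card Finset.subset_union_right)
  simp only [margin, thresholdTwo, if_neg (show ¬ (S ∪ W).card ≤ 1 by omega),
    if_neg (show ¬ W.card ≤ 1 by omega), sub_self]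

omit [Fintype α] in
theorem margin_thresholdTwo_singleton_empty (v : α) : margin thresholdTwo {v} ∅ = 0 := by
  simp [margin, thresholdTwo]

omit [Fintype α] in
theorem margin_thresholdTwo_singleton_singleton {v w : α} (h : v ≠ w) :
    margin thresholdTwo {v} {w} = 1 := by
  simp [margin, thresholdTwo, Finset.card_pair h]

omit [Fintype α] in
theorem SupermodularSet.card_le_one_of_thresholdTwo {T : Finset α}
    (hT : SupermodularSet thresholdTwo T) : T.card ≤ 1 := by
  obtain ⟨S, v, hpos⟩ := hT.exists_margin_pos thresholdTwo_monotone
  by_contra! hT2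
  have hST : 2 ≤ (S ∪ T).card :=
    (show 2 ≤ T.card from hT2).trans (Finset.card_le_card Finset.subset_union_right)
  exact hpos.ne' (margin_thresholdTwo_of_two_le_card _ hST)

omit [Fintype α] in
theorem supermodularSet_thresholdTwo_singleton {v w : α} (h : v ≠ w) :
    SupermodularSet thresholdTwo {w} := by
  refine ⟨Finset.singleton_nonempty w, ∅, v, Finset.notMem_singleton.mpr h, fun T' hT' => ?_⟩
  rw [Finset.ssubset_singleton_iff.mp hT', Finset.empty_union, Finset.empty_union,
    margin_thresholdTwo_singleton_empty, margin_thresholdTwo_singleton_singleton h]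
  exact one_pos

theorem depPlus_thresholdTwo (u : α) : depPlus thresholdTwo u = Finset.univ.erase u := by
  ext v
  simp only [depPlus, Finset.mem_filter, Finset.mem_univ, true_and, Finset.mem_erase,
    and_true, and_iff_left_iff_imp]
  intro hvu
  refine ⟨{v}, ?_⟩
  rw [Finset.sdiff_self, margin_thresholdTwo_singleton_empty,
    margin_thresholdTwo_singleton_singleton hvu.symm]
  exact one_pos

/-- on a ground set of `m ≥ 2` elements, the function with `f(S) = 0` for
`|S| ≤ 1` and `f(S) = 1` for `|S| ≥ 2` is normalized, monotone, has supermodular width 1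
and supermodular degree `m - 1`. -/
theorem threshold_function_width_one_degree_max (m : ℕ) (hm : 2 ≤ m)
    (hcard : Fintype.card α = m)
    (f : Finset α → ℝ) (hf : ∀ S : Finset α, f S = if S.card ≤ 1 then 0 else 1) :
    f ∅ = 0 ∧ (∀ S T : Finset α, S ⊆ T → f S ≤ f T) ∧
      smWidth f = 1 ∧ smDegree f = m - 1 := by
  obtain rfl : f = thresholdTwo := funext hf
  obtain ⟨v, w, hvw⟩ := Fintype.exists_pair_of_one_lt_card (by omega : 1 < Fintype.card α)
  have : Nonempty α := ⟨v⟩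
  refine ⟨by simp [thresholdTwo], fun _ _ h => thresholdTwo_monotone h, ?_, ?_⟩
  · exact le_antisymm (smWidth_le fun T hT => hT.card_le_one_of_thresholdTwo)
      (supermodularSet_thresholdTwo_singleton hvw).card_le_smWidth
  · refine smDegree_eq_of_forall_card_depPlus fun u => ?_
    rw [depPlus_thresholdTwo, Finset.card_erase_of_mem (Finset.mem_univ u), Finset.card_univ,
      hcard]
end

section
/- Let X be a finite ground set with m ≥ 3 elements and define the symmetric set function f on X by f(∅) = 0, f(X) = 2, and f(S) = 1 for all other S ⊆ X. Then f is normalized, monotone and subadditive (hence sa(f) = 0), yet f does not belong to MPH-d for any integer d < m/2. -/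
variable {α : Type*} [Fintype α] [DecidableEq α]

open Classical in
/-- Superadditive width: the maximum cardinality of a superadditive set (0 if none exists). -/
noncomputable def saWidth (f : Finset α → ℝ) : ℕ :=
  Finset.univ.powerset.sup fun T => if SuperadditiveSet f T then T.card else 0

/-- `g` is in PH-`d`: its (unique) hypergraph representation `h` (with
`g(S) = Σ_{T ⊆ S} h(T)`) is nonnegative and supported on sets of size at most `d`. -/
def PH (d : ℕ) (g : Finset α → ℝ) : Prop :=
  ∃ h : Finset α → ℝ, (∀ T : Finset α, 0 ≤ h T) ∧
    (∀ T : Finset α, 0 < h T → T.card ≤ d) ∧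
    ∀ S : Finset α, g S = ∑ T ∈ S.powerset, h T

/-- `f` is in MPH-`d`: `f` is the pointwise maximum of finitely many PH-`d` functions. -/
def MPH (d : ℕ) (f : Finset α → ℝ) : Prop :=
  ∃ (k : ℕ) (g : Fin (k + 1) → Finset α → ℝ), (∀ i, PH d (g i)) ∧
    ∀ S : Finset α, f S = Finset.univ.sup' Finset.univ_nonempty (fun i => g i S)

/-- on a ground set of `m ≥ 3` elements, the symmetric function with
`f(∅) = 0`, `f(X) = 2` and `f(S) = 1` otherwise is normalized, monotone and subadditive
(hence `sa(f) = 0`), yet it is not in MPH-`d` for any `d < m/2`. -/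
theorem subadditive_but_high_mph_level (m : ℕ) (hm : 3 ≤ m)
    (hcard : Fintype.card α = m) (f : Finset α → ℝ)
    (hf : ∀ S : Finset α,
      f S = if S = ∅ then 0 else if S = Finset.univ then 2 else 1) :
    f ∅ = 0 ∧ (∀ S T : Finset α, S ⊆ T → f S ≤ f T) ∧
      (∀ S T : Finset α, f (S ∪ T) ≤ f S + f T) ∧
      saWidth f = 0 ∧
      ∀ d : ℕ, 2 * d < m → ¬ MPH d f := by
  classical
  have hne : (Finset.univ : Finset α).Nonempty := by
    rw [← Finset.card_pos, Finset.card_univ, hcard]; omega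
  have huniv_ne : (Finset.univ : Finset α) ≠ ∅ := hne.ne_empty
  have hf0 : f ∅ = 0 := by rw [hf]; simp
  have hfu : f Finset.univ = 2 := by rw [hf]; simp [huniv_ne]
  have hnonneg : ∀ S : Finset α, 0 ≤ f S := by
    intro S; rw [hf]; split_ifs <;> norm_num
  have hle2 : ∀ S : Finset α, f S ≤ 2 := by
    intro S; rw [hf]; split_ifs <;> norm_num
  have hge1 : ∀ S : Finset α, S ≠ ∅ → 1 ≤ f S := by
    intro S hS; rw [hf, if_neg hS]; split_ifs <;> norm_num
  have hle1 : ∀ S : Finset α, S ≠ Finset.univ → f S ≤ 1 := by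
    intro S hS; rw [hf]; split_ifs <;> norm_num
  have hmono : ∀ S T : Finset α, S ⊆ T → f S ≤ f T := by
    intro S T hST
    by_cases hS : S = ∅
    · rw [hS, hf0]; exact hnonneg T
    · by_cases hSu : S = Finset.univ
      · have : T = Finset.univ := Finset.univ_subset_iff.mp (hSu ▸ hST)
        rw [hSu, this]
      · have hT : T ≠ ∅ := fun h => hS (Finset.subset_empty.mp (h ▸ hST))
        calc f S ≤ 1 := hle1 S hSu
          _ ≤ f T := hge1 T hT
  have hsub : ∀ S T : Finset α, f (S ∪ T) ≤ f S + f T := by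
    intro S T
    by_cases hS : S = ∅
    · rw [hS, hf0, Finset.empty_union]; linarith [hnonneg T]
    · by_cases hT : T = ∅
      · rw [hT, hf0, Finset.union_empty]; linarith [hnonneg S]
      · have := hge1 S hS
        have := hge1 T hT
        have := hle2 (S ∪ T)
        linarith
  have hnosuper : ∀ T : Finset α, ¬ SuperadditiveSet f T := by
    rintro T ⟨hT, S, hdisj, hall⟩
    have h := hall ∅ (Finset.empty_ssubset.mpr hT)
    unfold margin at h
    rw [Finset.union_empty, hf0] at h
    have := hsub S T
    linarith
  refine ⟨hf0, hmono, hsub, ?_, ?_⟩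
  · apply le_antisymm _ (Nat.zero_le _)
    apply Finset.sup_le
    intro T _
    rw [if_neg (hnosuper T)]
  · rintro d hd ⟨k, g, hPH, hmax⟩
    have hgle : ∀ (j) (S : Finset α), g j S ≤ f S := by
      intro j S; rw [hmax S]; exact Finset.le_sup' (fun i => g i S) (Finset.mem_univ j)
    obtain ⟨i, -, hi⟩ := Finset.exists_mem_eq_sup' (Finset.univ_nonempty)
      (fun j : Fin (k+1) => g j (Finset.univ : Finset α))
    have hgiu : g i Finset.univ = 2 := by
      rw [← hi, ← hmax Finset.univ, hfu]
    obtain ⟨h, hpos, hsupp, hrep⟩ := hPH i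
    set P := (Finset.univ : Finset α).powerset with hP
    have htot : ∑ T ∈ P, h T = 2 := by rw [← hrep, hgiu]
    have key : ∀ x : α, (1:ℝ) ≤ ∑ T ∈ P.filter (fun T => x ∈ T), h T := by
      intro x
      have hsplit := Finset.sum_filter_add_sum_filter_not P (fun T => x ∈ T) h
      rw [htot] at hsplit
      have heq : P.filter (fun T => ¬ x ∈ T) = (Finset.univ.erase x).powerset := by
        ext T
        simp [hP, Finset.mem_powerset, Finset.subset_erase, Finset.mem_filter,
          and_comm]
      have hene : Finset.univ.erase x ≠ Finset.univ :=
        ne_of_ssubset (Finset.erase_ssubset (Finset.mem_univ x))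
      have herase : ∑ T ∈ (Finset.univ.erase x).powerset, h T ≤ 1 := by
        rw [← hrep]
        exact le_trans (hgle i _) (hle1 _ hene)
      rw [heq] at hsplit
      linarith
    have hswap : ∑ x : α, ∑ T ∈ P.filter (fun T => x ∈ T), h T
        = ∑ T ∈ P, (T.card : ℝ) * h T := by
      have e1 : ∀ x : α, ∑ T ∈ P.filter (fun T => x ∈ T), h T
          = ∑ T ∈ P, if x ∈ T then h T else 0 := by
        intro x; rw [Finset.sum_filter]
      simp_rw [e1]
      rw [Finset.sum_comm]
      refine Finset.sum_congr rfl fun T _ => ?_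
      rw [Finset.sum_ite_mem, Finset.univ_inter, Finset.sum_const,
        nsmul_eq_mul]
    have hlow : (m : ℝ) ≤ ∑ T ∈ P, (T.card : ℝ) * h T := by
      rw [← hswap]
      calc (m : ℝ) = ∑ _x : α, (1:ℝ) := by
            rw [Finset.sum_const, Finset.card_univ, hcard, nsmul_eq_mul, mul_one]
        _ ≤ _ := Finset.sum_le_sum fun x _ => key x
    have hhigh : ∑ T ∈ P, (T.card : ℝ) * h T ≤ (d : ℝ) * 2 := by
      calc ∑ T ∈ P, (T.card : ℝ) * h T ≤ ∑ T ∈ P, (d : ℝ) * h T := by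
            refine Finset.sum_le_sum fun T _ => ?_
            rcases (hpos T).eq_or_lt with h0 | h0
            · rw [← h0]; simp
            · exact mul_le_mul_of_nonneg_right
                (Nat.cast_le.mpr (hsupp T h0)) (le_of_lt h0)
        _ = (d : ℝ) * 2 := by rw [← Finset.mul_sum, htot]
    have hdm : ((2 * d : ℕ) : ℝ) < (m : ℝ) := Nat.cast_lt.mpr hd
    push_cast at hdm
    linarith
end

section
/- Let t ≥ 1 and let X = {1, 2, …, 2t} (so m = 2t). Define the set function f on X by f(S) = |{i ∈ {1,…,t} : i ∈ S and t + i ∈ S}|. Then f is normalized and monotone, its supermodular width satisfies sm(f) = 1, and its superadditive width satisfies sa(f) = t = m/2. -/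
variable {α : Type*} [Fintype α] [DecidableEq α]

namespace PairAux
open Finset

variable {t : ℕ}

def g (A : Finset (Fin t ⊕ Fin t)) : ℕ :=
  (Finset.univ.filter fun i : Fin t => Sum.inl i ∈ A ∧ Sum.inr i ∈ A).card

lemma g_mono {A B : Finset (Fin t ⊕ Fin t)} (h : A ⊆ B) : g A ≤ g B := by
  apply Finset.card_le_card
  intro i hi
  simp only [Finset.mem_filter] at hi ⊢
  exact ⟨hi.1, h hi.2.1, h hi.2.2⟩

lemma g_insert_inl (j : Fin t) (A : Finset (Fin t ⊕ Fin t)) (h : Sum.inl j ∉ A) :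
    g (insert (Sum.inl j) A) = g A + (if Sum.inr j ∈ A then 1 else 0) := by
  by_cases hj : Sum.inr j ∈ A
  · rw [if_pos hj]
    have hset : (Finset.univ.filter fun i : Fin t =>
        Sum.inl i ∈ insert (Sum.inl j) A ∧ Sum.inr i ∈ insert (Sum.inl j) A)
        = insert j (Finset.univ.filter fun i : Fin t => Sum.inl i ∈ A ∧ Sum.inr i ∈ A) := by
      ext i
      simp only [Finset.mem_filter, Finset.mem_insert, Finset.mem_univ, true_and,
        Sum.inl.injEq, reduceCtorEq, false_or]
      by_cases hij : i = j
      · subst hij; tauto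
      · tauto
    rw [g, hset, Finset.card_insert_of_notMem (by simp [h]), g]
  · rw [if_neg hj]
    have hset : (Finset.univ.filter fun i : Fin t =>
        Sum.inl i ∈ insert (Sum.inl j) A ∧ Sum.inr i ∈ insert (Sum.inl j) A)
        = (Finset.univ.filter fun i : Fin t => Sum.inl i ∈ A ∧ Sum.inr i ∈ A) := by
      ext i
      simp only [Finset.mem_filter, Finset.mem_insert, Finset.mem_univ, true_and,
        Sum.inl.injEq, reduceCtorEq, false_or]
      by_cases hij : i = j
      · subst hij; tauto
      · tauto
    rw [g, hset, g]; omega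

lemma g_insert_inr (j : Fin t) (A : Finset (Fin t ⊕ Fin t)) (h : Sum.inr j ∉ A) :
    g (insert (Sum.inr j) A) = g A + (if Sum.inl j ∈ A then 1 else 0) := by
  by_cases hj : Sum.inl j ∈ A
  · rw [if_pos hj]
    have hset : (Finset.univ.filter fun i : Fin t =>
        Sum.inl i ∈ insert (Sum.inr j) A ∧ Sum.inr i ∈ insert (Sum.inr j) A)
        = insert j (Finset.univ.filter fun i : Fin t => Sum.inl i ∈ A ∧ Sum.inr i ∈ A) := by
      ext i
      simp only [Finset.mem_filter, Finset.mem_insert, Finset.mem_univ, true_and,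
        Sum.inr.injEq, reduceCtorEq, false_or]
      by_cases hij : i = j
      · subst hij; tauto
      · tauto
    rw [g, hset, Finset.card_insert_of_notMem (by simp [h]), g]
  · rw [if_neg hj]
    have hset : (Finset.univ.filter fun i : Fin t =>
        Sum.inl i ∈ insert (Sum.inr j) A ∧ Sum.inr i ∈ insert (Sum.inr j) A)
        = (Finset.univ.filter fun i : Fin t => Sum.inl i ∈ A ∧ Sum.inr i ∈ A) := by
      ext i
      simp only [Finset.mem_filter, Finset.mem_insert, Finset.mem_univ, true_and,
        Sum.inr.injEq, reduceCtorEq, false_or]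
      by_cases hij : i = j
      · subst hij; tauto
      · tauto
    rw [g, hset, g]; omega

def pr : Fin t ⊕ Fin t → Fin t ⊕ Fin t
  | Sum.inl i => Sum.inr i
  | Sum.inr i => Sum.inl i

lemma pr_ne (v : Fin t ⊕ Fin t) : pr v ≠ v := by cases v <;> simp [pr]

lemma g_insert (v : Fin t ⊕ Fin t) (A : Finset (Fin t ⊕ Fin t)) (h : v ∉ A) :
    g (insert v A) = g A + (if pr v ∈ A then 1 else 0) := by
  cases v with
  | inl j => exact g_insert_inl j A h
  | inr j => exact g_insert_inr j A h

section WithF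
variable (f : Finset (Fin t ⊕ Fin t) → ℝ) (hf : ∀ S, f S = (g S : ℝ))
include hf

lemma margin_single (v : Fin t ⊕ Fin t) (A : Finset (Fin t ⊕ Fin t)) (hv : v ∉ A) :
    margin f {v} A = if pr v ∈ A then (1 : ℝ) else 0 := by
  rw [margin, ← Finset.insert_eq, hf, hf, g_insert v A hv]
  split_ifs <;> push_cast <;> ring

omit hf in
lemma margin_mem (v : Fin t ⊕ Fin t) (A : Finset (Fin t ⊕ Fin t)) (hv : v ∈ A) :
    margin f {v} A = 0 := by
  rw [margin, ← Finset.insert_eq, Finset.insert_eq_self.mpr hv]; ring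

lemma sm_le (T : Finset (Fin t ⊕ Fin t)) (h : SupermodularSet f T) : T.card ≤ 1 := by
  by_contra hc
  push_neg at hc
  obtain ⟨hne, S, v, hv, hlt⟩ := h
  have hTne : (∅ : Finset (Fin t ⊕ Fin t)) ⊂ T := Finset.empty_ssubset.mpr hne
  by_cases hvS : v ∈ S
  · have h0 := hlt ∅ hTne
    rw [margin_mem f v _ (Finset.mem_union_left _ hvS),
        margin_mem f v _ (Finset.mem_union_left _ hvS)] at h0
    exact lt_irrefl _ h0
  · have hvST : v ∉ S ∪ T := by
      simp only [Finset.mem_union]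
      tauto
    by_cases hp : pr v ∈ S ∪ T
    · rcases Finset.mem_union.mp hp with hpS | hpT
      · have h0 := hlt ∅ hTne
        rw [Finset.union_empty] at h0
        rw [margin_single f hf v _ hvS, margin_single f hf v _ hvST,
            if_pos hpS, if_pos hp] at h0
        exact lt_irrefl _ h0
      · have hsub : {pr v} ⊂ T := by
          refine Finset.ssubset_iff_subset_ne.mpr ⟨Finset.singleton_subset_iff.mpr hpT, ?_⟩
          intro hEq
          rw [← hEq, Finset.card_singleton] at hc
          omega
        have h0 := hlt {pr v} hsub
        have hvS1 : v ∉ S ∪ {pr v} := by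
          simp only [Finset.mem_union, Finset.mem_singleton]
          push_neg
          exact ⟨hvS, fun hh => pr_ne v (hh ▸ rfl)⟩
        rw [margin_single f hf v _ hvS1, margin_single f hf v _ hvST,
            if_pos (Finset.mem_union_right _ (Finset.mem_singleton_self _)), if_pos hp] at h0
        exact lt_irrefl _ h0
    · have h0 := hlt ∅ hTne
      rw [Finset.union_empty] at h0
      rw [margin_single f hf v _ hvS, margin_single f hf v _ hvST, if_neg hp] at h0
      split_ifs at h0 <;> linarith

lemma sa_le (T : Finset (Fin t ⊕ Fin t)) (h : SuperadditiveSet f T) : T.card ≤ t := by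
  by_contra hc
  push_neg at hc
  obtain ⟨i, hil, hir⟩ : ∃ i : Fin t, Sum.inl i ∈ T ∧ Sum.inr i ∈ T := by
    by_contra hno
    push_neg at hno
    have hle : T.card ≤ (Finset.univ : Finset (Fin t)).card := by
      apply Finset.card_le_card_of_injOn (Sum.elim id id) (fun a _ => Finset.mem_univ _)
      intro a ha b hb hab
      simp only [Finset.mem_coe] at ha hb
      cases a <;> cases b <;> simp_all
    rw [Finset.card_univ, Fintype.card_fin] at hle
    omega
  obtain ⟨hne, S, hdisj, hlt⟩ := h
  set T' := T.erase (Sum.inl i) with hT'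
  have hsub : T' ⊂ T := Finset.erase_ssubset hil
  have h0 := hlt T' hsub
  have hinlT' : Sum.inl i ∉ T' := Finset.notMem_erase _ _
  have hinrT' : Sum.inr i ∈ T' := Finset.mem_erase.mpr ⟨by simp, hir⟩
  have hinlS : Sum.inl i ∉ S := Finset.disjoint_right.mp hdisj hil
  have hTins : T = insert (Sum.inl i) T' := (Finset.insert_erase hil).symm
  have hgT : g T = g T' + 1 := by
    rw [hTins, g_insert_inl i T' hinlT', if_pos hinrT']
  have hST : S ∪ T = insert (Sum.inl i) (S ∪ T') := by
    rw [hTins, Finset.union_insert]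
  have hinlST' : Sum.inl i ∉ S ∪ T' := by
    simp only [Finset.mem_union]
    tauto
  have hgST : g (S ∪ T) = g (S ∪ T') + 1 := by
    rw [hST, g_insert_inl i _ hinlST', if_pos (Finset.mem_union_right _ hinrT')]
  rw [margin, margin, hf, hf, hf, hf, hgST, hgT] at h0
  push_cast at h0
  linarith

end WithF

end PairAux

/-- on the ground set `X = {1,…,2t}` (modelled as `Fin t ⊕ Fin t`, where
`Sum.inl i` plays the role of item `i` and `Sum.inr i` the role of item `t + i`), the
function `f(S) = |{i ∈ [t] : i ∈ S and t + i ∈ S}|` is normalized and monotone, has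
supermodular width 1 and superadditive width `t = m/2`. -/
theorem pair_counting_function_widths (t : ℕ) (ht : 1 ≤ t)
    (f : Finset (Fin t ⊕ Fin t) → ℝ)
    (hf : ∀ S : Finset (Fin t ⊕ Fin t),
      f S = ((Finset.univ.filter fun i : Fin t =>
        Sum.inl i ∈ S ∧ Sum.inr i ∈ S).card : ℝ)) :
    f ∅ = 0 ∧ (∀ S T : Finset (Fin t ⊕ Fin t), S ⊆ T → f S ≤ f T) ∧
      smWidth f = 1 ∧ saWidth f = t ∧ 2 * t = Fintype.card (Fin t ⊕ Fin t) := by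
  classical
  have hf' : ∀ S, f S = (PairAux.g S : ℝ) := hf
  refine ⟨?_, ?_, ?_, ?_, ?_⟩
  · rw [hf']; simp [PairAux.g]
  · intro S T h; rw [hf', hf']; exact_mod_cast PairAux.g_mono h
  · apply le_antisymm
    · apply Finset.sup_le
      intro T _
      split_ifs with h
      · exact PairAux.sm_le f hf' T h
      · exact Nat.zero_le _
    · have hsm : SupermodularSet f ({Sum.inl ⟨0, ht⟩} : Finset (Fin t ⊕ Fin t)) := by
        refine ⟨Finset.singleton_nonempty _, ∅, Sum.inr ⟨0, ht⟩, by simp, ?_⟩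
        intro T' hT'
        rw [Finset.ssubset_singleton_iff.mp hT', Finset.union_empty, Finset.empty_union,
            PairAux.margin_single f hf' _ _ (Finset.notMem_empty _),
            PairAux.margin_single f hf' _ _ (by simp)]
        simp [PairAux.pr]
      have hle := Finset.le_sup (f := fun T => if SupermodularSet f T then T.card else 0)
        (Finset.mem_powerset.mpr
          (Finset.subset_univ ({Sum.inl ⟨0, ht⟩} : Finset (Fin t ⊕ Fin t))))
      simp only [if_pos hsm, Finset.card_singleton] at hle
      exact hle
  · set Tl : Finset (Fin t ⊕ Fin t) := Finset.univ.image Sum.inl with hTl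
    set Sr : Finset (Fin t ⊕ Fin t) := Finset.univ.image Sum.inr with hSr
    have hTlcard : Tl.card = t := by
      rw [hTl, Finset.card_image_of_injective _ Sum.inl_injective, Finset.card_univ,
        Fintype.card_fin]
    apply le_antisymm
    · apply Finset.sup_le
      intro T _
      split_ifs with h
      · exact PairAux.sa_le f hf' T h
      · exact Nat.zero_le _
    · have hsa : SuperadditiveSet f Tl := by
        refine ⟨⟨Sum.inl ⟨0, ht⟩, by simp [hTl]⟩, Sr, ?_, ?_⟩
        · rw [Finset.disjoint_left]
          intro a ha hb
          rw [hSr, Finset.mem_image] at ha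
          rw [hTl, Finset.mem_image] at hb
          obtain ⟨i, -, rfl⟩ := ha
          obtain ⟨j, -, hj⟩ := hb
          exact Sum.inl_ne_inr hj
        · intro T' hT'
          have hsubTl : T' ⊆ Tl := hT'.subset
          have hgTl : PairAux.g Tl = 0 := by
            rw [PairAux.g, Finset.card_eq_zero, Finset.filter_eq_empty_iff]
            rintro i - ⟨-, h2⟩
            rw [hTl, Finset.mem_image] at h2
            obtain ⟨j, -, hj⟩ := h2
            exact Sum.inl_ne_inr hj
          have hgT' : PairAux.g T' = 0 := by
            rw [PairAux.g, Finset.card_eq_zero, Finset.filter_eq_empty_iff]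
            rintro i - ⟨-, h2⟩
            have h2' := hsubTl h2
            rw [hTl, Finset.mem_image] at h2'
            obtain ⟨j, -, hj⟩ := h2'
            exact Sum.inl_ne_inr hj
          have hgU : PairAux.g (Sr ∪ Tl) = t := by
            rw [PairAux.g, Finset.filter_true_of_mem, Finset.card_univ, Fintype.card_fin]
            intro i _
            exact ⟨Finset.mem_union_right _
                (by rw [hTl]; exact Finset.mem_image_of_mem _ (Finset.mem_univ _)),
              Finset.mem_union_left _
                (by rw [hSr]; exact Finset.mem_image_of_mem _ (Finset.mem_univ _))⟩
          have hgST' : PairAux.g (Sr ∪ T') = T'.card := by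
            have himg : T' = (Finset.univ.filter fun i : Fin t => Sum.inl i ∈ T').image Sum.inl := by
              ext x
              simp only [Finset.mem_image, Finset.mem_filter, Finset.mem_univ, true_and]
              constructor
              · intro hx
                have hx' := hsubTl hx
                rw [hTl, Finset.mem_image] at hx'
                obtain ⟨i, -, rfl⟩ := hx'
                exact ⟨i, hx, rfl⟩
              · rintro ⟨i, hi, rfl⟩; exact hi
            have hfilter : (Finset.univ.filter fun i : Fin t =>
                Sum.inl i ∈ Sr ∪ T' ∧ Sum.inr i ∈ Sr ∪ T')
                = Finset.univ.filter fun i : Fin t => Sum.inl i ∈ T' := by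
              ext i
              simp only [Finset.mem_filter, Finset.mem_univ, true_and, Finset.mem_union]
              constructor
              · rintro ⟨h1 | h1, -⟩
                · exfalso
                  rw [hSr, Finset.mem_image] at h1
                  obtain ⟨j, -, hj⟩ := h1
                  exact Sum.inr_ne_inl hj
                · exact h1
              · intro h1
                exact ⟨Or.inr h1, Or.inl
                  (by rw [hSr]; exact Finset.mem_image_of_mem _ (Finset.mem_univ _))⟩
            rw [PairAux.g, hfilter]
            conv_rhs => rw [himg]
            rw [Finset.card_image_of_injective _ Sum.inl_injective]
          have hcard : T'.card < t := by
            have hlt := Finset.card_lt_card hT'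
            rwa [hTlcard] at hlt
          rw [margin, margin, hf', hf', hf', hf', hgU, hgTl, hgT', hgST']
          push_cast
          simp only [Nat.cast_zero, sub_zero]
          exact_mod_cast hcard
      have hle := Finset.le_sup (f := fun T => if SuperadditiveSet f T then T.card else 0)
        (Finset.mem_powerset.mpr (Finset.subset_univ Tl))
      simp only [if_pos hsa, hTlcard] at hle
      exact hle
  · simp [Fintype.card_sum, two_mul]
end

section
/- Let X be a finite ground set with m ≥ 2 elements and define the set function f on X by f(S) = |S|(|S| − 1)/2 (the number of two-element subsets of S). Then f belongs to PH-2 (hence to MPH-2), while its supermodular width and superadditive width both equal m − 1; in particular, for every u ∈ X the set X ∖ {u} is both a supermodular set and a superadditive set w.r.t. f. -/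
variable {α : Type*} [Fintype α] [DecidableEq α]

set_option linter.unusedSectionVars false in
lemma margin_single_aux (f : Finset α → ℝ)
    (hf : ∀ S : Finset α, f S = (S.card.choose 2 : ℝ)) {v : α} {A : Finset α}
    (hv : v ∉ A) : margin f {v} A = A.card := by
  simp only [margin, hf, ← Finset.insert_eq, Finset.card_insert_of_notMem hv]
  rw [Nat.choose_succ_succ]
  push_cast [Nat.choose_one_right]
  ring

/-- on a ground set of `m ≥ 2` elements, the function counting the
two-element subsets of `S`, `f(S) = |S|(|S|-1)/2`, is in PH-2 (hence MPH-2), while its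
supermodular and superadditive widths are both `m - 1`; in particular `X ∖ {u}` is both
a supermodular set and a superadditive set for every `u`. -/
theorem pair_count_in_mph2_but_max_widths (m : ℕ) (hm : 2 ≤ m)
    (hcard : Fintype.card α = m) (f : Finset α → ℝ)
    (hf : ∀ S : Finset α, f S = (S.card.choose 2 : ℝ)) :
    PH 2 f ∧ MPH 2 f ∧ smWidth f = m - 1 ∧ saWidth f = m - 1 ∧
      ∀ u : α, SupermodularSet f (Finset.univ \ {u}) ∧
        SuperadditiveSet f (Finset.univ \ {u}) := by
  classical
  have hcardT : ∀ u : α, (Finset.univ \ ({u} : Finset α)).card = m - 1 := by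
    intro u
    rw [Finset.card_sdiff_of_subset (Finset.subset_univ _), Finset.card_univ, hcard,
      Finset.card_singleton]
  have hne : ∀ u : α, (Finset.univ \ ({u} : Finset α)).Nonempty := by
    intro u
    rw [← Finset.card_pos, hcardT u]
    omega
  have hnotmem : ∀ (u : α) (T' : Finset α), T' ⊆ Finset.univ \ {u} → u ∉ T' := by
    intro u T' hT' h
    exact (Finset.mem_sdiff.mp (hT' h)).2 (Finset.mem_singleton_self u)
  have hsm : ∀ u : α, SupermodularSet f (Finset.univ \ {u}) := by
    intro u
    refine ⟨hne u, ∅, u, by simp, fun T' hT' => ?_⟩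
    rw [Finset.empty_union, Finset.empty_union,
      margin_single_aux f hf (hnotmem u T' hT'.subset),
      margin_single_aux f hf (by simp)]
    exact_mod_cast Finset.card_lt_card hT'
  have hsa : ∀ u : α, SuperadditiveSet f (Finset.univ \ {u}) := by
    intro u
    refine ⟨hne u, {u}, by simp, fun T' hT' => ?_⟩
    rw [margin_single_aux f hf (hnotmem u T' hT'.subset),
      margin_single_aux f hf (by simp)]
    exact_mod_cast Finset.card_lt_card hT'
  have hPH : PH 2 f := by
    refine ⟨fun T => if T.card = 2 then 1 else 0, ?_, ?_, ?_⟩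
    · intro T; dsimp only; split <;> norm_num
    · intro T hT
      by_cases h : T.card = 2
      · omega
      · simp [h] at hT
    · intro S
      rw [hf, Finset.sum_boole, ← Finset.powersetCard_eq_filter,
        Finset.card_powersetCard]
  have hα : Nonempty α := by
    rw [← Fintype.card_pos_iff, hcard]; omega
  obtain ⟨u⟩ := hα
  refine ⟨hPH, ⟨0, fun _ => f, fun _ => hPH, fun S => ?_⟩, ?_, ?_, fun u => ⟨hsm u, hsa u⟩⟩
  · simp
  · -- smWidth
    apply le_antisymm
    · apply Finset.sup_le
      intro T hT
      split
      · rename_i h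
        obtain ⟨-, S, v, hv, -⟩ := h
        have hss : T ⊂ Finset.univ := by
          refine Finset.ssubset_univ_iff.mpr fun h => ?_
          exact hv (h ▸ Finset.mem_univ v)
        have := Finset.card_lt_card hss
        rw [Finset.card_univ, hcard] at this
        omega
      · omega
    · have hmem : Finset.univ \ ({u} : Finset α) ∈ (Finset.univ : Finset α).powerset :=
        Finset.mem_powerset.mpr (Finset.subset_univ _)
      have h1 : (if SupermodularSet f (Finset.univ \ {u}) then (Finset.univ \ {u}).card else 0) ≤ smWidth f :=
        Finset.le_sup (f := fun T => if SupermodularSet f T then T.card else 0) hmem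
      rw [if_pos (hsm u), hcardT u] at h1
      exact h1
  · -- saWidth
    apply le_antisymm
    · apply Finset.sup_le
      intro T hT
      split
      · rename_i h
        obtain ⟨hTne, S, hdisj, hlt⟩ := h
        have hTne' : T ≠ Finset.univ := by
          intro hTu
          subst hTu
          have hS : S = ∅ := Finset.eq_empty_of_forall_notMem fun x hx =>
            absurd (Finset.mem_univ x) (Finset.disjoint_left.mp hdisj hx)
          have h0 : (∅ : Finset α) ⊂ Finset.univ :=
            Finset.empty_ssubset.mpr ⟨u, Finset.mem_univ u⟩
          have := hlt ∅ h0
          simp [hS, margin] at this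
        have hss : T ⊂ Finset.univ :=
          (Finset.subset_univ T).ssubset_of_ne hTne'
        have := Finset.card_lt_card hss
        rw [Finset.card_univ, hcard] at this
        omega
      · omega
    · have hmem : Finset.univ \ ({u} : Finset α) ∈ (Finset.univ : Finset α).powerset :=
        Finset.mem_powerset.mpr (Finset.subset_univ _)
      have h1 : (if SuperadditiveSet f (Finset.univ \ {u}) then (Finset.univ \ {u}).card else 0) ≤ saWidth f :=
        Finset.le_sup (f := fun T => if SuperadditiveSet f T then T.card else 0) hmem
      rw [if_pos (hsa u), hcardT u] at h1
      exact h1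
end

section
/- Let X be a finite ground set, let d ≥ 0 and k ≥ 1 be integers, and let f be a normalized monotone set function on X that is d-scopic submodular. Then for every S ⊆ X and every S* ⊆ X with |S*| ≤ k, one has f(S*) − f(S) ≤ k · (max over T ⊆ X with |T| ≤ d + 1 of f(T | S)). -/
variable {α : Type*} [Fintype α] [DecidableEq α]

/-! Each element added to `S` gains at most `M`, the best gain of a set of size `d + 1` over `S`:
scopic submodularity bounds the gain of `v` over `T ⊇ S` by its gain over `S ∪ T'` with
`|T'| ≤ d`, and monotonicity bounds that by the gain of `{v} ∪ T'` over `S`. Adding the elements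
of `S*` one at a time then gives `f(S*) - f(S) ≤ f(S* ∪ S) - f(S) ≤ |S*| M ≤ k M`. -/

open Finset

section Margin

omit [Fintype α]

variable {f : Finset α → ℝ}

@[simp]
theorem margin_empty_left (S : Finset α) : margin f ∅ S = 0 := by
  simp [margin]

theorem margin_singleton_of_mem {v : α} {T : Finset α} (hv : v ∈ T) : margin f {v} T = 0 := by
  simp [margin, hv]

theorem margin_union_right_le_margin_union_left (hmono : Monotone f) (A S T : Finset α) :
    margin f A (S ∪ T) ≤ margin f (A ∪ T) S := by
  have hST : f S ≤ f (S ∪ T) := hmono subset_union_left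
  have hunion : A ∪ (S ∪ T) = A ∪ T ∪ S := by ac_rfl
  simp only [margin, hunion]
  linarith

theorem sub_le_card_mul_of_margin_singleton_le {S : Finset α} {M : ℝ}
    (hM : ∀ T, S ⊆ T → ∀ v, margin f {v} T ≤ M) (A : Finset α) :
    f (A ∪ S) - f S ≤ #A * M := by
  induction A using Finset.induction_on with
  | empty => simp
  | @insert v A hv ih =>
    have hstep := hM (A ∪ S) subset_union_right v
    rw [margin, ← insert_eq, ← insert_union] at hstep
    rw [card_insert_of_notMem hv]
    push_cast
    linarith

end Margin

namespace ScopicSubmodular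

omit [Fintype α]

variable {d : ℕ} {f : Finset α → ℝ} {S : Finset α} {M : ℝ}

theorem margin_singleton_le (hscopic : ScopicSubmodular d f) (hmono : Monotone f)
    (hM : ∀ U : Finset α, #U ≤ d + 1 → margin f U S ≤ M) {T : Finset α} (hST : S ⊆ T) (v : α) :
    margin f {v} T ≤ M := by
  by_cases hv : v ∈ T
  · simpa [margin_singleton_of_mem hv] using hM ∅ (by simp)
  obtain ⟨T', -, hT'card, hle⟩ := hscopic S T hST v hv
  calc margin f {v} T ≤ margin f {v} (S ∪ T') := hle
    _ ≤ margin f ({v} ∪ T') S := margin_union_right_le_margin_union_left hmono _ _ _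
    _ ≤ M := hM _ <| (card_union_le _ _).trans (by simp [hT'card, add_comm])

theorem sub_le_card_mul (hscopic : ScopicSubmodular d f) (hmono : Monotone f)
    (hM : ∀ U : Finset α, #U ≤ d + 1 → margin f U S ≤ M) (A : Finset α) :
    f A - f S ≤ #A * M := by
  have hA : f A ≤ f (A ∪ S) := hmono subset_union_left
  have := sub_le_card_mul_of_margin_singleton_le
    (fun _ hST v => hscopic.margin_singleton_le hmono hM hST v) A
  linarith

end ScopicSubmodular

/-- if `f` is a normalized monotone `d`-scopic submodular function, then for
every `S` and every `S*` with `|S*| ≤ k`,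
`f(S*) - f(S) ≤ k · max_{|T| ≤ d+1} f(T | S)`. -/
theorem scopic_submodular_gain_bound (f : Finset α → ℝ)
    (hmono : ∀ S T : Finset α, S ⊆ T → f S ≤ f T) (d k : ℕ)
    (hscopic : ScopicSubmodular d f) :
    ∀ S Sstar : Finset α, Sstar.card ≤ k →
      f Sstar - f S ≤ (k : ℝ) *
        ((Finset.univ.powerset.filter fun T : Finset α => T.card ≤ d + 1).sup'
          ⟨∅, by simp⟩ fun T => margin f T S) := by
  intro S Sstar hcard
  set M := (Finset.univ.powerset.filter fun T : Finset α => T.card ≤ d + 1).sup'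
    ⟨∅, by simp⟩ fun T => margin f T S
  have hM : ∀ U : Finset α, #U ≤ d + 1 → margin f U S ≤ M := fun U hU =>
    le_sup' (fun T => margin f T S) (mem_filter.mpr ⟨mem_powerset.mpr (subset_univ U), hU⟩)
  have hM_nonneg : 0 ≤ M := by simpa using hM ∅ (by simp)
  calc f Sstar - f S ≤ #Sstar * M := hscopic.sub_le_card_mul (fun _ _ => hmono _ _) hM Sstar
    _ ≤ k * M := by gcongr
end

section
/- Let X be a finite ground set, let d ≥ 0 be an integer, and let f_1, …, f_n be normalized monotone set functions on X, each d-scopic submodular (equivalently, each of supermodular width at most d). Suppose X_{j,0} = ∅ for all j ∈ {1,…,n}, and for each step i ∈ {1,…,t} there are an index j_i and a set T_i contained in the unallocated items U_{i−1} := X ∖ ∪_{j} X_{j,i−1} with |T_i| ≤ d + 1, such that X_{j_i,i} = X_{j_i,i−1} ∪ T_i, X_{j,i} = X_{j,i−1} for j ≠ j_i, and the greedy property holds: f_{j_i}(T_i | X_{j_i,i−1}) ≥ f_j(T′ | X_{j,i−1}) for every j ∈ {1,…,n} and every T′ ⊆ U_{i−1} with |T′| ≤ d + 1. If ∪_j X_{j,t}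 = X, then for every partition (X*_1, …, X*_n) of X into n pairwise disjoint sets: Σ_{j=1}^{n} f_j(X*_j) ≤ (d + 2) · Σ_{j=1}^{n} f_j(X_{j,t}). -/
variable {α : Type*} [Fintype α] [DecidableEq α]

/-- batched greedy allocation for welfare maximization. If each `F j` is
normalized, monotone and `d`-scopic submodular, and at each step `i ∈ {1,…,t}` a batch
`T_i ⊆ X ∖ ⋃_j X_{j,i-1}` of at most `d + 1` unallocated items is given to agent `j_i`,
maximizing the margin over all agents and all such batches, and at the end every item is
allocated, then for every partition `(X*_1, …, X*_n)` of `X`,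
`Σ_j F_j(X*_j) ≤ (d+2) Σ_j F_j(X_{j,t})`. -/
theorem batched_greedy_welfare_maximization (n : ℕ) (F : Fin n → Finset α → ℝ)
    (hnorm : ∀ j, F j ∅ = 0)
    (hmono : ∀ j, ∀ S T : Finset α, S ⊆ T → F j S ≤ F j T)
    (d : ℕ) (hscopic : ∀ j, ScopicSubmodular d (F j))
    (t : ℕ) (Xa : Fin n → ℕ → Finset α) (T : ℕ → Finset α) (ji : ℕ → Fin n)
    (h0 : ∀ j, Xa j 0 = ∅)
    (hTsub : ∀ i, 1 ≤ i → i ≤ t →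
      T i ⊆ Finset.univ \ Finset.univ.biUnion (fun j => Xa j (i - 1)))
    (hTcard : ∀ i, 1 ≤ i → i ≤ t → (T i).card ≤ d + 1)
    (hupd : ∀ i, 1 ≤ i → i ≤ t → Xa (ji i) i = Xa (ji i) (i - 1) ∪ T i)
    (hupd' : ∀ i, 1 ≤ i → i ≤ t → ∀ j, j ≠ ji i → Xa j i = Xa j (i - 1))
    (hgreedy : ∀ i, 1 ≤ i → i ≤ t → ∀ j, ∀ T' : Finset α,
      T' ⊆ Finset.univ \ Finset.univ.biUnion (fun j' => Xa j' (i - 1)) →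
      T'.card ≤ d + 1 →
      margin (F j) T' (Xa j (i - 1)) ≤ margin (F (ji i)) (T i) (Xa (ji i) (i - 1)))
    (hfull : Finset.univ.biUnion (fun j => Xa j t) = Finset.univ)
    (Xstar : Fin n → Finset α)
    (hdisj : ∀ j j', j ≠ j' → Disjoint (Xstar j) (Xstar j'))
    (hcover : Finset.univ.biUnion Xstar = Finset.univ) :
    ∑ j, F j (Xstar j) ≤ ((d : ℝ) + 2) * ∑ j, F j (Xa j t) := by
  classical
  set δ : ℕ → ℝ := fun i => margin (F (ji i)) (T i) (Xa (ji i) (i - 1)) with hδ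
  -- one-step monotonicity of allocations
  have hstep : ∀ i, 1 ≤ i → i ≤ t → ∀ j, Xa j (i - 1) ⊆ Xa j i := by
    intro i h1 hit j
    by_cases hj : j = ji i
    · subst hj; rw [hupd i h1 hit]; exact Finset.subset_union_left
    · rw [hupd' i h1 hit j hj]
  have hmonoX : ∀ (j : Fin n) (m' : ℕ), m' ≤ t → ∀ m, m ≤ m' → Xa j m ⊆ Xa j m' := by
    intro j m'
    induction m' with
    | zero => intro _ m hm; rw [Nat.le_zero.mp hm]
    | succ k ih =>
      intro hkt m hm
      rcases Nat.lt_succ_iff_lt_or_eq.mp (Nat.lt_succ_of_le hm) with h | h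
      · refine (ih (by omega) m (by omega)).trans ?_
        have := hstep (k + 1) (by omega) hkt j
        simpa using this
      · rw [h]
  have hmonoUn : ∀ k m, k ≤ m → m ≤ t →
      Finset.univ.biUnion (fun j => Xa j k) ⊆ Finset.univ.biUnion (fun j => Xa j m) := by
    intro k m hkm hmt x hx
    rw [Finset.mem_biUnion] at hx ⊢
    obtain ⟨j, -, hj⟩ := hx
    exact ⟨j, Finset.mem_univ j, hmonoX j m hmt k hkm hj⟩
  -- allocation time of an item
  have hexv : ∀ v : α, ∃ i, v ∈ Finset.univ.biUnion (fun j => Xa j i) := fun v =>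
    ⟨t, by rw [hfull]; exact Finset.mem_univ v⟩
  set idx : α → ℕ := fun v => Nat.find (hexv v) with hidxdef
  have hidxmem : ∀ v, v ∈ Finset.univ.biUnion (fun j => Xa j (idx v)) := fun v =>
    Nat.find_spec (hexv v)
  have hidxmin : ∀ v m, m < idx v → v ∉ Finset.univ.biUnion (fun j => Xa j m) := fun v m hm =>
    Nat.find_min (hexv v) hm
  have hidxle : ∀ v, idx v ≤ t := fun v =>
    Nat.find_min' (hexv v) (by rw [hfull]; exact Finset.mem_univ v)
  have hidx1 : ∀ v, 1 ≤ idx v := by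
    intro v
    rcases Nat.eq_zero_or_pos (idx v) with h | h
    · exfalso
      have := hidxmem v
      rw [h] at this
      simp [h0] at this
    · exact h
  -- an item is in the batch at its allocation time
  have hidxT : ∀ v, v ∈ T (idx v) := by
    intro v
    have h1 := hidx1 v
    have h2 := hidxle v
    have hv := hidxmem v
    have hv' : v ∉ Finset.univ.biUnion (fun j => Xa j (idx v - 1)) :=
      hidxmin v (idx v - 1) (by omega)
    rw [Finset.mem_biUnion] at hv
    obtain ⟨j, -, hj⟩ := hv
    by_cases hji : j = ji (idx v)
    · subst hji
      rw [hupd (idx v) h1 h2] at hj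
      rcases Finset.mem_union.mp hj with h | h
      · exact absurd (Finset.mem_biUnion.mpr ⟨ji (idx v), Finset.mem_univ _, h⟩) hv'
      · exact h
    · rw [hupd' (idx v) h1 h2 j hji] at hj
      exact absurd (Finset.mem_biUnion.mpr ⟨j, Finset.mem_univ j, hj⟩) hv'
  -- items allocated to j by time m that were already allocated by time k were allocated to j by time k
  have hkey : ∀ m, m ≤ t → ∀ (j : Fin n) k, k ≤ m → ∀ w, w ∈ Xa j m →
      w ∈ Finset.univ.biUnion (fun j' => Xa j' k) → w ∈ Xa j k := by
    intro m
    induction m with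
    | zero => intro _ j k hk w hw _; rw [Nat.le_zero.mp hk]; exact hw
    | succ m ih =>
      intro hmt j k hk w hw hwUn
      rcases Nat.lt_succ_iff_lt_or_eq.mp (Nat.lt_succ_of_le hk) with h | h
      · have hkm : k ≤ m := by omega
        by_cases hji : j = ji (m + 1)
        · subst hji
          rw [hupd (m + 1) (by omega) hmt] at hw
          simp only [Nat.add_sub_cancel] at hw
          rcases Finset.mem_union.mp hw with h' | h'
          · exact ih (by omega) _ k hkm w h' hwUn
          · exfalso
            have := hTsub (m + 1) (by omega) hmt h'
            simp only [Nat.add_sub_cancel, Finset.mem_sdiff] at this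
            exact this.2 (hmonoUn k m hkm (by omega) hwUn)
        · rw [hupd' (m + 1) (by omega) hmt j hji] at hw
          simp only [Nat.add_sub_cancel] at hw
          exact ih (by omega) j k hkm w hw hwUn
      · rw [h]; exact hw
  -- nonnegativity of step margins
  have hδnonneg : ∀ i, 1 ≤ i → i ≤ t → 0 ≤ δ i := by
    intro i h1 h2
    have h := hgreedy i h1 h2 (ji 0) ∅ (Finset.empty_subset _) (by simp)
    simp only [hδ]
    simpa [margin] using h
  -- telescoping: the algorithm's welfare is the sum of step margins
  have htel : ∑ i ∈ Finset.range t, δ (i + 1) = ∑ j, F j (Xa j t) := by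
    have h1 : ∀ i ∈ Finset.range t,
        δ (i + 1) = (∑ j, F j (Xa j (i + 1))) - (∑ j, F j (Xa j i)) := by
      intro i hi
      rw [Finset.mem_range] at hi
      have h1i : 1 ≤ i + 1 := by omega
      have hit : i + 1 ≤ t := by omega
      rw [← Finset.sum_sub_distrib]
      rw [Fintype.sum_eq_single (ji (i + 1)) (fun b hb => by
        rw [hupd' (i + 1) h1i hit b hb]
        simp)]
      rw [hupd (i + 1) h1i hit]
      simp only [Nat.add_sub_cancel, hδ, margin, Finset.union_comm]
    calc ∑ i ∈ Finset.range t, δ (i + 1)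
        = ∑ i ∈ Finset.range t,
            ((∑ j, F j (Xa j (i + 1))) - (∑ j, F j (Xa j i))) := Finset.sum_congr rfl h1
      _ = (∑ j, F j (Xa j t)) - (∑ j, F j (Xa j 0)) :=
          Finset.sum_range_sub (fun i => ∑ j, F j (Xa j i)) t
      _ = ∑ j, F j (Xa j t) := by simp [h0, hnorm]
  -- the main per-agent bound
  have hmain : ∀ (j : Fin n) (V : Finset α), Disjoint V (Xa j t) →
      F j (V ∪ Xa j t) - F j (Xa j t) ≤ ∑ v ∈ V, δ (idx v) := by
    intro j V
    induction V using Finset.strongInduction with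
    | _ V ih =>
      intro hdisjV
      rcases V.eq_empty_or_nonempty with rfl | hne
      · simp
      obtain ⟨v, hvV, hvmin⟩ := V.exists_min_image idx hne
      have hi1 : 1 ≤ idx v := hidx1 v
      have hit : idx v ≤ t := hidxle v
      have hvA : v ∉ Xa j t := Finset.disjoint_left.mp hdisjV hvV
      have hBA : Xa j (idx v - 1) ⊆ Xa j t := hmonoX j t le_rfl (idx v - 1) (by omega)
      have hvT' : v ∉ V.erase v ∪ Xa j t := by
        rw [Finset.mem_union]
        push_neg
        exact ⟨Finset.notMem_erase v V, hvA⟩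
      obtain ⟨T', hT'sub, hT'card, hT'le⟩ :=
        hscopic j (Xa j (idx v - 1)) (V.erase v ∪ Xa j t)
          (hBA.trans Finset.subset_union_right) v hvT'
      have m1 : margin (F j) {v} (V.erase v ∪ Xa j t) = F j (V ∪ Xa j t) - F j (V.erase v ∪ Xa j t) := by
        have h : {v} ∪ (V.erase v ∪ Xa j t) = V ∪ Xa j t := by
          rw [← Finset.union_assoc, ← Finset.insert_eq, Finset.insert_erase hvV]
        rw [margin, h]
      -- the candidate batch
      set W : Finset α := insert v T' \ Xa j (idx v - 1) with hW
      have hWsub : W ⊆ Finset.univ \ Finset.univ.biUnion (fun j' => Xa j' (idx v - 1)) := by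
        intro w hw
        rw [hW, Finset.mem_sdiff] at hw
        obtain ⟨hw1, hwB⟩ := hw
        rw [Finset.mem_sdiff]
        refine ⟨Finset.mem_univ w, ?_⟩
        rcases Finset.mem_insert.mp hw1 with rfl | hwT'
        · exact hidxmin w (idx w - 1) (by omega)
        · rcases Finset.mem_union.mp (hT'sub hwT') with hwV' | hwA
          · have hle : idx v ≤ idx w := hvmin w (Finset.mem_of_mem_erase hwV')
            exact hidxmin w (idx v - 1) (by omega)
          · intro hcon
            exact hwB (hkey t le_rfl j (idx v - 1) (by omega) w hwA hcon)
      have hWcard : W.card ≤ d + 1 := by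
        calc W.card ≤ (insert v T').card := Finset.card_le_card (Finset.sdiff_subset)
          _ ≤ T'.card + 1 := Finset.card_insert_le v T'
          _ ≤ d + 1 := by omega
      have m2 : margin (F j) {v} (Xa j (idx v - 1) ∪ T') ≤ margin (F j) W (Xa j (idx v - 1)) := by
        have hsets : W ∪ Xa j (idx v - 1) = {v} ∪ (Xa j (idx v - 1) ∪ T') := by
          ext x
          simp only [hW, Finset.mem_union, Finset.mem_sdiff, Finset.mem_insert,
            Finset.mem_singleton]
          tauto
        rw [margin, margin, hsets]
        have := hmono j (Xa j (idx v - 1)) (Xa j (idx v - 1) ∪ T') Finset.subset_union_left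
        linarith
      have hWg : margin (F j) W (Xa j (idx v - 1)) ≤ δ (idx v) :=
        hgreedy (idx v) hi1 hit j W hWsub hWcard
      have ihV : F j (V.erase v ∪ Xa j t) - F j (Xa j t) ≤ ∑ w ∈ V.erase v, δ (idx w) :=
        ih (V.erase v) (Finset.erase_ssubset hvV)
          (hdisjV.mono_left (Finset.erase_subset v V))
      have hsum : ∑ w ∈ V, δ (idx w) = δ (idx v) + ∑ w ∈ V.erase v, δ (idx w) :=
        (Finset.add_sum_erase V (fun w => δ (idx w)) hvV).symm
      rw [hsum]
      linarith
  -- per-agent bound on the optimum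
  have hperagent : ∀ j, F j (Xstar j) ≤ F j (Xa j t) + ∑ v ∈ Xstar j, δ (idx v) := by
    intro j
    have h1 : F j (Xstar j) ≤ F j ((Xstar j \ Xa j t) ∪ Xa j t) := by
      rw [Finset.sdiff_union_self_eq_union]
      exact hmono j _ _ Finset.subset_union_left
    have h2 := hmain j (Xstar j \ Xa j t) Finset.sdiff_disjoint
    have h3 : ∑ v ∈ Xstar j \ Xa j t, δ (idx v) ≤ ∑ v ∈ Xstar j, δ (idx v) :=
      Finset.sum_le_sum_of_subset_of_nonneg Finset.sdiff_subset
        (fun v _ _ => hδnonneg (idx v) (hidx1 v) (hidxle v))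
    linarith
  -- partition sum
  have hpart : ∑ j, ∑ v ∈ Xstar j, δ (idx v) = ∑ v : α, δ (idx v) := by
    rw [← hcover]
    exact (Finset.sum_biUnion (fun j _ j' _ hjj' => hdisj j j' hjj')).symm
  -- fiberwise bound
  have hfiber : ∑ v : α, δ (idx v) ≤ ((d : ℝ) + 1) * ∑ i ∈ Finset.range t, δ (i + 1) := by
    have h1 : ∑ v : α, δ (idx v) =
        ∑ i ∈ Finset.Icc 1 t, ∑ v ∈ Finset.univ.filter (fun v => idx v = i), δ (idx v) :=
      (Finset.sum_fiberwise_of_maps_to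
        (fun v _ => Finset.mem_Icc.mpr ⟨hidx1 v, hidxle v⟩) _).symm
    have h2 : ∀ i ∈ Finset.Icc 1 t,
        ∑ v ∈ Finset.univ.filter (fun v => idx v = i), δ (idx v) ≤ ((d : ℝ) + 1) * δ i := by
      intro i hi
      rw [Finset.mem_Icc] at hi
      have heq : ∑ v ∈ Finset.univ.filter (fun v => idx v = i), δ (idx v)
          = (Finset.univ.filter (fun v => idx v = i)).card • δ i := by
        rw [← Finset.sum_const]
        refine Finset.sum_congr rfl ?_
        intro v hv
        rw [Finset.mem_filter] at hv
        rw [hv.2]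
      rw [heq, nsmul_eq_mul]
      have hsub : Finset.univ.filter (fun v => idx v = i) ⊆ T i := by
        intro v hv
        rw [Finset.mem_filter] at hv
        have := hidxT v
        rwa [hv.2] at this
      have hcard : ((Finset.univ.filter (fun v => idx v = i)).card : ℝ) ≤ (d : ℝ) + 1 := by
        have := (Finset.card_le_card hsub).trans (hTcard i hi.1 hi.2)
        exact_mod_cast this
      exact mul_le_mul_of_nonneg_right hcard (hδnonneg i hi.1 hi.2)
    rw [h1]
    calc ∑ i ∈ Finset.Icc 1 t, ∑ v ∈ Finset.univ.filter (fun v => idx v = i), δ (idx v)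
        ≤ ∑ i ∈ Finset.Icc 1 t, ((d : ℝ) + 1) * δ i := Finset.sum_le_sum h2
      _ = ((d : ℝ) + 1) * ∑ i ∈ Finset.Icc 1 t, δ i := by rw [Finset.mul_sum]
      _ = ((d : ℝ) + 1) * ∑ i ∈ Finset.range t, δ (i + 1) := by
          rw [← Finset.Ico_add_one_right_eq_Icc, Finset.sum_Ico_eq_sum_range]
          simp [Nat.add_comm]
  calc ∑ j, F j (Xstar j)
      ≤ ∑ j, (F j (Xa j t) + ∑ v ∈ Xstar j, δ (idx v)) :=
        Finset.sum_le_sum (fun j _ => hperagent j)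
    _ = (∑ j, F j (Xa j t)) + ∑ v : α, δ (idx v) := by
        rw [Finset.sum_add_distrib, hpart]
    _ ≤ (∑ j, F j (Xa j t)) + ((d : ℝ) + 1) * ∑ i ∈ Finset.range t, δ (i + 1) := by
        linarith
    _ = ((d : ℝ) + 2) * ∑ j, F j (Xa j t) := by rw [htel]; ring
end

section
/- Let X be a finite set with m ≥ 1 elements, let n, r, K be integers with 1 ≤ r, n·r ≤ m and K ≤ m, let S_1, …, S_T ⊆ X be sets with |S_i| ≤ K for all i, and let k_1, …, k_T ∈ {1, …, n} be indices. If T · (K/m)^r < 1, then there exist pairwise disjoint sets R_1, …, R_n ⊆ X, each of cardinality r, such that R_{k_i} is not a subset of S_i for any i ∈ {1, …, T}. -/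
/-!
Encode pairwise disjoint `r`-sets `R_1, …, R_n` as an embedding `f : Fin n × Fin r ↪ X`, with
`R_j` the image of row `j`. However the values of `f` on a fixed set of `r` positions are chosen,
the remaining positions can be filled in the same number of ways, so the proportion of embeddings
sending those positions into a set of size `K` is `K^(r) / m^(r) ≤ (K / m)^r` (falling factorials).
A union bound over the `T` queries then leaves an embedding that defeats all of them.
-/

open Finset

theorem Nat.sub_mul_le_mul_sub {K m : ℕ} (hK : K ≤ m) (r : ℕ) : (K - r) * m ≤ K * (m - r) := by
  rcases le_total r K with h | h
  · obtain ⟨a, rfl⟩ := Nat.exists_eq_add_of_le h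
    obtain ⟨b, rfl⟩ := Nat.exists_eq_add_of_le hK
    rw [Nat.add_sub_cancel_left, show r + a + b - r = a + b by omega]
    nlinarith
  · simp [Nat.sub_eq_zero_of_le h]

theorem Nat.descFactorial_mul_pow_le_pow_mul_descFactorial {K m : ℕ} (hK : K ≤ m) (r : ℕ) :
    K.descFactorial r * m ^ r ≤ K ^ r * m.descFactorial r := by
  induction r with
  | zero => simp
  | succ r ih =>
    calc K.descFactorial (r + 1) * m ^ (r + 1)
        = ((K - r) * m) * (K.descFactorial r * m ^ r) := by
          rw [Nat.descFactorial_succ, pow_succ]; ring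
      _ ≤ (K * (m - r)) * (K ^ r * m.descFactorial r) :=
          Nat.mul_le_mul (Nat.sub_mul_le_mul_sub hK r) ih
      _ = K ^ (r + 1) * m.descFactorial (r + 1) := by
          rw [Nat.descFactorial_succ, pow_succ]; ring

theorem Finset.exists_forall_notMem_of_sum_card_lt {Ω τ : Type*} [Fintype Ω] [Fintype τ]
    (B : τ → Finset Ω) (h : ∑ i, #(B i) < Fintype.card Ω) : ∃ ω, ∀ i, ω ∉ B i := by
  classical
  by_contra! hcover
  have : univ ⊆ univ.biUnion B := fun ω _ ↦ by simpa using hcover ω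
  exact h.not_ge ((card_le_card this).trans card_biUnion_le)

namespace Function.Embedding

variable {ι α : Type*} [Fintype ι] [Fintype α] [DecidableEq ι] [DecidableEq α]

theorem card_compl_range {A : Type*} [Fintype A] (g : A ↪ α) :
    Fintype.card ↥(Set.range g)ᶜ = Fintype.card α - Fintype.card A := by
  rw [Fintype.card_compl_set, Fintype.card_range]

theorem card_filter_inl_trans {A B : Type*} [Fintype A] [Fintype B]
    [DecidableEq A] [DecidableEq B] (P : (A ↪ α) → Prop) [DecidablePred P] :
    #{f : A ⊕ B ↪ α | P (inl.trans f)} =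
      #{g | P g} * (Fintype.card α - Fintype.card A).descFactorial (Fintype.card B) := by
  let e := Equiv.sumEmbeddingEquivSigmaEmbeddingRestricted.subtypeEquiv
    (p := fun f : A ⊕ B ↪ α ↦ P (inl.trans f)) (q := fun x ↦ P x.1) fun _ ↦ Iff.rfl
  rw [← Fintype.card_subtype, Fintype.card_congr (e.trans (Equiv.subtypeSigmaEquiv _ _)),
    Fintype.card_sigma]
  simp_rw [Fintype.card_embedding_eq, card_compl_range]
  rw [sum_const, card_univ, Fintype.card_subtype, smul_eq_mul]

theorem card_filter_mapsTo (s : Finset ι) (S : Finset α) :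
    #{f : ι ↪ α | ∀ x ∈ s, f x ∈ S} =
      (#S).descFactorial #s * (Fintype.card α - #s).descFactorial (Fintype.card ι - #s) := by
  have hsplit : #{f : ι ↪ α | ∀ x ∈ s, f x ∈ S} =
      #{f : {x // x ∈ s} ⊕ {x // x ∉ s} ↪ α | ∀ a, inl.trans f a ∈ (S : Set α)} := by
    simp only [← Fintype.card_subtype]
    refine Fintype.card_congr
      ((Equiv.embeddingCongr (Equiv.sumCompl (· ∈ s)).symm (Equiv.refl α)).subtypeEquiv ?_)
    intro f
    simp [Equiv.embeddingCongr]
  rw [hsplit, card_filter_inl_trans (B := {x // x ∉ s}) fun g : s ↪ α ↦ ∀ a, g a ∈ (S : Set α),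
    ← Fintype.card_subtype, Fintype.card_congr (Equiv.codRestrict _ (S : Set α)),
    Fintype.card_embedding_eq, Fintype.card_subtype_compl, Fintype.card_coe]
  simp

theorem card_filter_mapsTo_mul_pow_le (s : Finset ι) (S : Finset α) :
    #{f : ι ↪ α | ∀ x ∈ s, f x ∈ S} * Fintype.card α ^ #s ≤
      #S ^ #s * Fintype.card (ι ↪ α) := by
  rw [card_filter_mapsTo, Fintype.card_embedding_eq,
    ← Nat.descFactorial_mul_descFactorial (card_le_univ s)]
  calc (#S).descFactorial #s * (Fintype.card α - #s).descFactorial (Fintype.card ι - #s) *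
        Fintype.card α ^ #s
      = ((#S).descFactorial #s * Fintype.card α ^ #s) *
          (Fintype.card α - #s).descFactorial (Fintype.card ι - #s) := by ring
    _ ≤ (#S ^ #s * (Fintype.card α).descFactorial #s) *
          (Fintype.card α - #s).descFactorial (Fintype.card ι - #s) :=
        Nat.mul_le_mul_right _
          (Nat.descFactorial_mul_pow_le_pow_mul_descFactorial (card_le_univ S) _)
    _ = _ := by ring

theorem exists_forall_not_mapsTo {τ : Type*} [Fintype τ] (s : τ → Finset ι)
    (S : τ → Finset α) {r K : ℕ} (hs : ∀ i, #(s i) = r) (hS : ∀ i, #(S i) ≤ K)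
    (hτ : Fintype.card τ * K ^ r < Fintype.card α ^ r)
    (hια : Fintype.card ι ≤ Fintype.card α) :
    ∃ f : ι ↪ α, ∀ i, ¬ ∀ x ∈ s i, f x ∈ S i := by
  have hΩ : 0 < Fintype.card (ι ↪ α) := Fintype.card_pos_iff.2 (nonempty_of_card_le hια)
  have hbad (i : τ) : #{f : ι ↪ α | ∀ x ∈ s i, f x ∈ S i} * Fintype.card α ^ r ≤
      K ^ r * Fintype.card (ι ↪ α) := by
    rw [← hs i]
    exact (card_filter_mapsTo_mul_pow_le (s i) (S i)).trans
      (Nat.mul_le_mul_right _ (Nat.pow_le_pow_left (hS i) _))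
  have hsum : ∑ i, #{f : ι ↪ α | ∀ x ∈ s i, f x ∈ S i} < Fintype.card (ι ↪ α) := by
    refine Nat.lt_of_mul_lt_mul_right (a := Fintype.card α ^ r) ?_
    calc (∑ i, #{f : ι ↪ α | ∀ x ∈ s i, f x ∈ S i}) * Fintype.card α ^ r
        ≤ ∑ _i : τ, K ^ r * Fintype.card (ι ↪ α) := by
          rw [sum_mul]; exact sum_le_sum fun i _ ↦ hbad i
      _ = Fintype.card τ * K ^ r * Fintype.card (ι ↪ α) := by
          rw [sum_const, card_univ, smul_eq_mul, mul_assoc]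
      _ < Fintype.card α ^ r * Fintype.card (ι ↪ α) := Nat.mul_lt_mul_of_pos_right hτ hΩ
      _ = Fintype.card (ι ↪ α) * Fintype.card α ^ r := mul_comm _ _
  obtain ⟨f, hf⟩ := exists_forall_notMem_of_sum_card_lt _ hsum
  exact ⟨f, fun i ↦ by simpa using hf i⟩

end Function.Embedding

theorem exists_unseen_disjoint_subsets_general {α : Type*} [Fintype α] [DecidableEq α]
    (m n r K T : ℕ) (hm : Fintype.card α = m) (hm1 : 1 ≤ m)
    (hnrm : n * r ≤ m)
    (S : Fin T → Finset α) (k : Fin T → Fin n)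
    (hS : ∀ i, (S i).card ≤ K)
    (hT : (T : ℝ) * ((K : ℝ) / (m : ℝ)) ^ r < 1) :
    ∃ R : Fin n → Finset α, (∀ j, (R j).card = r) ∧
      (∀ j j', j ≠ j' → Disjoint (R j) (R j')) ∧
      ∀ i, ¬ R (k i) ⊆ S i := by
  subst hm
  have hTK : T * K ^ r < Fintype.card α ^ r := by
    have hpos : (0 : ℝ) < (Fintype.card α : ℝ) ^ r := pow_pos (by exact_mod_cast hm1) r
    rw [div_pow, ← mul_div_assoc, div_lt_one hpos] at hT
    exact_mod_cast hT
  obtain ⟨f, hf⟩ := Function.Embedding.exists_forall_not_mapsTo (r := r)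
    (fun i ↦ {k i} ×ˢ (univ : Finset (Fin r))) S (by simp) hS (by simpa using hTK)
    (by simpa using hnrm)
  refine ⟨fun j ↦ ({j} ×ˢ univ).map f, fun j ↦ by simp, fun j j' hjj' ↦ ?_,
    fun i hsub ↦ hf i fun x hx ↦ hsub (mem_map_of_mem f hx)⟩
  exact (disjoint_map f).2 (disjoint_product.2 (.inl (disjoint_singleton.2 hjj')))

/-- if `X` has `m ≥ 1` elements, `1 ≤ r`, `n·r ≤ m`, `K ≤ m`, the queries
`(S_1, k_1), …, (S_T, k_T)` have `|S_i| ≤ K` and `k_i ∈ {1,…,n}`, and `T · (K/m)^r < 1`,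
then there are pairwise disjoint `r`-element subsets `R_1, …, R_n` of `X` such that
`R_{k_i} ⊄ S_i` for every `i`. -/
theorem exists_unseen_disjoint_subsets {α : Type*} [Fintype α] [DecidableEq α]
    (m n r K T : ℕ) (hm : Fintype.card α = m) (hm1 : 1 ≤ m)
    (hr : 1 ≤ r) (hnrm : n * r ≤ m) (hK : K ≤ m)
    (S : Fin T → Finset α) (k : Fin T → Fin n)
    (hS : ∀ i, (S i).card ≤ K)
    (hT : (T : ℝ) * ((K : ℝ) / (m : ℝ)) ^ r < 1) :
    ∃ R : Fin n → Finset α, (∀ j, (R j).card = r) ∧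
      (∀ j j', j ≠ j' → Disjoint (R j) (R j')) ∧
      ∀ i, ¬ R (k i) ⊆ S i :=
  exists_unseen_disjoint_subsets_general m n r K T hm hm1 hnrm S k hS hT
end

section
/- Let d ≥ 0 and m ≥ 1 be integers, let X be a ground set with m elements, and let f be a normalized monotone superadditive set function on X that is d-scopic submodular (equivalently, of supermodular width at most d). Then for every S ⊆ X there exists a set function g on X that is (d+1)-constraint homogeneous (CH-(d+1)) such that (d + 1)·H_{⌈m/(d+1)⌉}·g(S) ≥ f(S) and g(T) ≤ f(T) for every T ⊆ X. In other words, the class of superadditive functions of supermodular width at most d is pointwise (d + 1)·H_{⌈m/(d+1)⌉}-approximated by CH-(d+1). -/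
variable {α : Type*} [Fintype α] [DecidableEq α]

/-- `g` is `d`-constraint homogeneous (CH-`d`): there are a real `w ≥ 0` and pairwise
disjoint sets `Q_1, …, Q_h`, each of size at most `d`, such that
`g(S) = w · Σ_{i : Q_i ⊆ S} |Q_i|` for every `S`. -/
def CH (d : ℕ) (g : Finset α → ℝ) : Prop :=
  ∃ (w : ℝ) (h : ℕ) (Q : Fin h → Finset α), 0 ≤ w ∧
    (∀ i, (Q i).card ≤ d) ∧ (∀ i j, i ≠ j → Disjoint (Q i) (Q j)) ∧
    ∀ S : Finset α,
      g S = w * ∑ i ∈ Finset.univ.filter (fun i => Q i ⊆ S), ((Q i).card : ℝ)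

/-- The `n`-th harmonic number `H_n = Σ_{k=1}^n 1/k`. -/
noncomputable def harmonic' (n : ℕ) : ℝ := ∑ k ∈ Finset.Icc 1 n, (1 : ℝ) / k

/-
Split `S` greedily into blocks `Q₀, Q₁, …` of `d + 1` elements (the last one possibly smaller),
each of maximal value among the small subsets of what is left. Taking `S = ∅` in the definition,
scopic submodularity bounds the marginal value of an element by the value of some set of at most
`d + 1` elements containing it, hence `f S ≤ ∑ |Qᵢ| f(Qᵢ)`, and the values `f(Qᵢ)` do not increase.
Let `Q₀, …, Q_k` be the prefix maximising `A = f(Q_k) (|Q₀| + ⋯ + |Q_k|)`. Weighting these blocks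
by `f(Q_k) / (d + 1)` gives a CH-`(d + 1)` function below `f` by superadditivity, with value
`A / (d + 1)` at `S`. Since all blocks but the last are full, `|Qᵢ| f(Qᵢ) ≤ A / (i + 1)`, and
there are at most `⌈m / (d + 1)⌉` blocks.
-/

open Finset

lemma harmonic'_eq_sum_range (n : ℕ) : harmonic' n = ∑ i ∈ range n, 1 / ((i : ℝ) + 1) := by
  have h : harmonic' n = harmonic n := by
    rw [harmonic_eq_sum_Icc, harmonic']
    push_cast
    simp only [one_div]
  rw [h, harmonic]
  push_cast
  simp only [one_div]

lemma harmonic'_mono : Monotone harmonic' := fun _ _ hab =>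
  sum_le_sum_of_subset_of_nonneg (Icc_subset_Icc_right hab) fun _ _ _ => by positivity

lemma exists_sum_mul_le_harmonic'_mul {n : ℕ} (hn : 0 < n) (a c : ℕ → ℝ)
    (ha : ∀ i, 0 ≤ a i) (hc : ∀ i < n, (i + 1) * c i ≤ ∑ j ∈ range (i + 1), c j) :
    ∃ k < n, ∑ i ∈ range n, c i * a i ≤ harmonic' n * (a k * ∑ j ∈ range (k + 1), c j) := by
  obtain ⟨k, hk, hmax⟩ := exists_max_image (range n)
    (fun i => a i * ∑ j ∈ range (i + 1), c j) (nonempty_range_iff.mpr hn.ne')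
  refine ⟨k, mem_range.mp hk, ?_⟩
  rw [harmonic'_eq_sum_range, sum_mul]
  refine sum_le_sum fun i hi => ?_
  have hterm : (i + 1) * (c i * a i) ≤ a k * ∑ j ∈ range (k + 1), c j := calc
    (i + 1) * (c i * a i) = a i * ((i + 1) * c i) := by ring
    _ ≤ a i * ∑ j ∈ range (i + 1), c j := mul_le_mul_of_nonneg_left (hc i (mem_range.mp hi)) (ha i)
    _ ≤ _ := hmax i hi
  rw [div_mul_eq_mul_div, one_mul, le_div_iff₀ (by positivity)]
  linarith

section

variable {β : Type*}

/-- The blocks are `B 0, …, B (n - 1)`; the values of `B` beyond `n` play no role. -/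
structure GreedyDecomposition (d : ℕ) (f : Finset β → ℝ) (S : Finset β) (n : ℕ)
    (B : ℕ → Finset β) : Prop where
  subset : ∀ i < n, B i ⊆ S
  nonempty : ∀ i < n, (B i).Nonempty
  card_le : ∀ i < n, (B i).card ≤ d + 1
  disjoint : ∀ i j, i < j → j < n → Disjoint (B i) (B j)
  card_eq : ∀ i j, i < j → j < n → (B i).card = d + 1
  antitone : ∀ i j, i < j → j < n → f (B j) ≤ f (B i)
  sum_card : ∑ i ∈ range n, (B i).card = S.card
  le_sum : f S ≤ ∑ i ∈ range n, (B i).card * f (B i)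

variable {d : ℕ} {f : Finset β → ℝ} {S : Finset β} {n : ℕ} {B : ℕ → Finset β}

namespace GreedyDecomposition

lemma empty (hf : f ∅ ≤ 0) : GreedyDecomposition d f ∅ 0 B where
  subset := by simp
  nonempty := by simp
  card_le := by simp
  disjoint := by simp
  card_eq := by simp
  antitone := by simp
  sum_card := by simp
  le_sum := by simpa using hf

lemma succ_mul_card_le (hB : GreedyDecomposition d f S n B) {i : ℕ} (hi : i < n) :
    (i + 1) * ((B i).card : ℝ) ≤ ∑ j ∈ range (i + 1), ((B j).card : ℝ) := by
  have hle : ∀ j ∈ range (i + 1), ((B i).card : ℝ) ≤ (B j).card := fun j hj => by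
    rcases (mem_range_succ_iff.mp hj).lt_or_eq with hji | rfl
    · exact_mod_cast (hB.card_le i hi).trans (hB.card_eq j i hji hi).ge
    · rfl
  simpa using sum_le_sum hle

lemma le_ceil_div (hB : GreedyDecomposition d f S n B) {m : ℕ} (hm : S.card ≤ m) :
    n ≤ ⌈(m : ℝ) / (d + 1)⌉₊ := by
  obtain _ | t := n
  · exact Nat.zero_le _
  have hfull : ∑ i ∈ range t, (B i).card = t * (d + 1) := by
    rw [sum_congr rfl fun i hi => hB.card_eq i t (mem_range.mp hi) (Nat.lt_succ_self t)]
    simp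
  have hlast := card_pos.mpr (hB.nonempty t (Nat.lt_succ_self t))
  have hsum := hB.sum_card
  rw [sum_range_succ, hfull] at hsum
  have ht : (t : ℝ) * (d + 1) < m := by exact_mod_cast (by omega : t * (d + 1) < m)
  exact Nat.lt_ceil.mpr ((lt_div_iff₀ (by positivity)).mpr ht)

end GreedyDecomposition

variable [DecidableEq β]

lemma sum_le_apply_biUnion_of_superadditive {ι : Type*} [DecidableEq ι] {f : Finset β → ℝ}
    (hf₀ : 0 ≤ f ∅) (hf : ∀ S T, Disjoint S T → f S + f T ≤ f (S ∪ T)) (Q : ι → Finset β)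
    (I : Finset ι) (hQ : (I : Set ι).PairwiseDisjoint Q) :
    ∑ i ∈ I, f (Q i) ≤ f (I.biUnion Q) := by
  induction I using Finset.induction_on with
  | empty => simpa using hf₀
  | insert i I hi ih =>
    rw [coe_insert] at hQ
    have hdisj : Disjoint (Q i) (I.biUnion Q) := (disjoint_biUnion_right _ _ _).mpr
      fun j hj => hQ (Set.mem_insert i _) (Set.mem_insert_of_mem i hj)
        (ne_of_mem_of_not_mem hj hi).symm
    rw [sum_insert hi, biUnion_insert]
    linarith [ih (hQ.subset (Set.subset_insert i _)), hf _ _ hdisj]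

lemma ScopicSubmodular.apply_insert_le_add (hscopic : ScopicSubmodular d f)
    (hf : ∀ T, 0 ≤ f T) {U : Finset β} {v : β} (hv : v ∉ U) {M : ℝ}
    (hM : ∀ Q ⊆ insert v U, Q.card ≤ d + 1 → f Q ≤ M) :
    f (insert v U) ≤ f U + M := by
  obtain ⟨T', hT'U, hT'card, hmargin⟩ := hscopic ∅ U (empty_subset U) v hv
  rw [margin, margin, empty_union, ← insert_eq, ← insert_eq] at hmargin
  have hsmall : f (insert v T') ≤ M :=
    hM _ (insert_subset_insert v hT'U) ((card_insert_le v T').trans (by omega))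
  linarith [hf T']

lemma ScopicSubmodular.apply_union_le_add_card_mul (hscopic : ScopicSubmodular d f)
    (hf : ∀ T, 0 ≤ f T) (W D : Finset β) (hWD : Disjoint W D) {M : ℝ}
    (hM : ∀ Q ⊆ W ∪ D, Q.card ≤ d + 1 → f Q ≤ M) :
    f (W ∪ D) ≤ f W + D.card * M := by
  induction D using Finset.induction_on with
  | empty => simp
  | insert v D hvD ih =>
    rw [disjoint_insert_right] at hWD
    rw [union_insert] at hM ⊢
    have hvWD : v ∉ W ∪ D := by simp [hvD, hWD.1]
    have hstep := hscopic.apply_insert_le_add hf hvWD hM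
    have hrest := ih hWD.2 fun Q hQ => hM Q (hQ.trans (subset_insert v _))
    rw [card_insert_of_notMem hvD]
    push_cast
    linarith

namespace GreedyDecomposition

lemma cons (hscopic : ScopicSubmodular d f) (hf : ∀ T, 0 ≤ f T) {Q : Finset β}
    (hB : GreedyDecomposition d f (S \ Q) n B)
    (hQS : Q ⊆ S) (hQ : Q.Nonempty) (hQcard : Q.card = min (d + 1) S.card)
    (hmax : ∀ R ⊆ S, R.card ≤ d + 1 → f R ≤ f Q) :
    GreedyDecomposition d f S (n + 1) fun | 0 => Q | i + 1 => B i where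
  subset
    | 0, _ => hQS
    | i + 1, hi => (hB.subset i (by omega)).trans sdiff_subset
  nonempty
    | 0, _ => hQ
    | i + 1, hi => hB.nonempty i (by omega)
  card_le
    | 0, _ => hQcard.trans_le (min_le_left _ _)
    | i + 1, hi => hB.card_le i (by omega)
  disjoint
    | 0, j + 1, _, hj => disjoint_of_subset_right (hB.subset j (by omega)) disjoint_sdiff
    | i + 1, j + 1, hij, hj => hB.disjoint i j (by omega) (by omega)
  card_eq
    | 0, j + 1, _, hj => by
      have hS : Q.card < S.card := by
        have := card_pos.mpr ((hB.nonempty j (by omega)).mono (hB.subset j (by omega)))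
        rw [card_sdiff_of_subset hQS] at this
        omega
      simp only
      omega
    | i + 1, j + 1, hij, hj => hB.card_eq i j (by omega) (by omega)
  antitone
    | 0, j + 1, _, hj =>
      hmax _ ((hB.subset j (by omega)).trans sdiff_subset) (hB.card_le j (by omega))
    | i + 1, j + 1, hij, hj => hB.antitone i j (by omega) (by omega)
  sum_card := by
    rw [sum_range_succ', hB.sum_card, card_sdiff_of_subset hQS]
    have := card_le_card hQS
    simp only
    omega
  le_sum := by
    rw [sum_range_succ']
    have hpeel := hscopic.apply_union_le_add_card_mul hf (S \ Q) Q sdiff_disjoint fun R hR =>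
      hmax R (hR.trans (by rw [sdiff_union_of_subset hQS]))
    rw [sdiff_union_of_subset hQS] at hpeel
    linarith [hB.le_sum]

lemma exists_ch_le (hB : GreedyDecomposition d f S n B)
    (hsuperadd : ∀ S T : Finset β, Disjoint S T → f S + f T ≤ f (S ∪ T))
    (hmono : ∀ S T : Finset β, S ⊆ T → f S ≤ f T) (hf : ∀ T, 0 ≤ f T) {k : ℕ} (hk : k < n) :
    ∃ g, CH (d + 1) g ∧ (d + 1) * g S = f (B k) * ∑ j ∈ range (k + 1), ((B j).card : ℝ) ∧
      ∀ T, g T ≤ f T := by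
  set w := f (B k) / (d + 1)
  have hw₀ : 0 ≤ w := div_nonneg (hf _) (by positivity)
  have hw : w * (d + 1) = f (B k) := div_mul_cancel₀ _ (by positivity)
  let Q : Fin (k + 1) → Finset β := fun i => B i
  have hQdisj : ∀ i j, i ≠ j → Disjoint (Q i) (Q j) := fun i j hij => by
    rcases Fin.lt_or_lt_of_ne hij with h | h
    · exact hB.disjoint i j h (by omega)
    · exact (hB.disjoint j i h (by omega)).symm
  have hwQ : ∀ i, w * (Q i).card ≤ f (Q i) := fun i => by
    have hcard : ((Q i).card : ℝ) ≤ d + 1 := by exact_mod_cast hB.card_le i (by omega)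
    have hval : f (B k) ≤ f (Q i) := by
      rcases (Nat.lt_or_eq_of_le (Nat.lt_succ_iff.mp i.isLt)) with h | h
      · exact hB.antitone i k h hk
      · simp [Q, h]
    calc w * (Q i).card ≤ w * (d + 1) := mul_le_mul_of_nonneg_left hcard hw₀
      _ = f (B k) := hw
      _ ≤ f (Q i) := hval
  refine ⟨_, ⟨w, k + 1, Q, hw₀, fun i => hB.card_le i (by omega), hQdisj,
    fun _ => rfl⟩, ?_, fun T => ?_⟩
  · have hQS : ∀ i ∈ univ, Q i ⊆ S := fun i _ => hB.subset i (by omega)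
    rw [filter_true_of_mem hQS, Fin.sum_univ_eq_sum_range (fun i => ((B i).card : ℝ)), ← hw]
    ring
  · calc w * ∑ i ∈ univ.filter (fun i => Q i ⊆ T), ((Q i).card : ℝ)
        ≤ ∑ i ∈ univ.filter (fun i => Q i ⊆ T), f (Q i) := by
          rw [mul_sum]
          exact sum_le_sum fun i _ => hwQ i
      _ ≤ f ((univ.filter (fun i => Q i ⊆ T)).biUnion Q) :=
          sum_le_apply_biUnion_of_superadditive (hf ∅) hsuperadd Q _
            fun i _ j _ hij => hQdisj i j hij
      _ ≤ f T := hmono _ _ (biUnion_subset.mpr fun i hi => (mem_filter.mp hi).2)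

end GreedyDecomposition

lemma exists_greedyDecomposition (hscopic : ScopicSubmodular d f)
    (hmono : ∀ S T : Finset β, S ⊆ T → f S ≤ f T) (hf : ∀ T, 0 ≤ f T) (hf₀ : f ∅ = 0)
    (S : Finset β) : ∃ n B, GreedyDecomposition d f S n B := by
  induction S using Finset.strongInduction with
  | H S ih =>
  rcases S.eq_empty_or_nonempty with rfl | hS
  · exact ⟨0, fun _ => ∅, .empty hf₀.le⟩
  set q := min (d + 1) S.card
  have hqS : q ≤ S.card := min_le_right _ _
  obtain ⟨Q, hQmem, hQmax⟩ :=
    exists_max_image (S.powersetCard q) f (powersetCard_nonempty.mpr hqS)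
  obtain ⟨hQS, hQcard⟩ := mem_powersetCard.mp hQmem
  have hQ : Q.Nonempty := card_pos.mp (by have := card_pos.mpr hS; omega)
  have hmax : ∀ R ⊆ S, R.card ≤ d + 1 → f R ≤ f Q := fun R hRS hR => by
    obtain ⟨R', hRR', hR'S, hR'card⟩ :=
      exists_subsuperset_card_eq hRS (le_min hR (card_le_card hRS)) hqS
    exact (hmono R R' hRR').trans (hQmax R' (mem_powersetCard.mpr ⟨hR'S, hR'card⟩))
  obtain ⟨n, B, hB⟩ := ih (S \ Q) (sdiff_ssubset hQS hQ)
  exact ⟨n + 1, _, hB.cons hscopic hf hQS hQ hQcard hmax⟩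

end

theorem sm_superadditive_pointwise_approx_by_ch_general (d : ℕ)
    (f : Finset α → ℝ)
    (hnorm : f ∅ = 0) (hmono : ∀ S T : Finset α, S ⊆ T → f S ≤ f T)
    (hsuperadd : ∀ S T : Finset α, Disjoint S T → f S + f T ≤ f (S ∪ T))
    (hscopic : ScopicSubmodular d f) :
    ∀ S : Finset α, ∃ g : Finset α → ℝ, CH (d + 1) g ∧
      f S ≤ ((d : ℝ) + 1) * harmonic' ⌈(Fintype.card α : ℝ) / ((d : ℝ) + 1)⌉₊ * g S ∧
      ∀ T : Finset α, g T ≤ f T := by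
  have hf : ∀ T, 0 ≤ f T := fun T => hnorm ▸ hmono ∅ T (empty_subset T)
  intro S
  obtain ⟨n, B, hB⟩ := exists_greedyDecomposition hscopic hmono hf hnorm S
  rcases Nat.eq_zero_or_pos n with rfl | hn
  · refine ⟨0, ⟨0, 0, Fin.elim0, le_rfl, Fin.rec0, Fin.rec0, fun _ => by simp⟩, ?_, hf⟩
    simpa using hB.le_sum
  obtain ⟨k, hk, hsum⟩ := exists_sum_mul_le_harmonic'_mul hn (fun i => f (B i))
    (fun i => (B i).card) (fun i => hf (B i)) fun i hi => hB.succ_mul_card_le hi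
  obtain ⟨g, hg, hgS, hgf⟩ := hB.exists_ch_le hsuperadd hmono hf hk
  refine ⟨g, hg, ?_, hgf⟩
  have hn_le := harmonic'_mono (hB.le_ceil_div (card_le_univ S))
  have hgS_nonneg : 0 ≤ (d + 1) * g S := by
    rw [hgS]
    exact mul_nonneg (hf _) (sum_nonneg fun _ _ => Nat.cast_nonneg _)
  calc f S ≤ ∑ i ∈ range n, ((B i).card : ℝ) * f (B i) := hB.le_sum
    _ ≤ harmonic' n * ((d + 1) * g S) := by rw [hgS]; exact hsum
    _ ≤ harmonic' ⌈(Fintype.card α : ℝ) / ((d : ℝ) + 1)⌉₊ * ((d + 1) * g S) :=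
      mul_le_mul_of_nonneg_right hn_le hgS_nonneg
    _ = _ := by ring

/-- every normalized monotone superadditive function that is `d`-scopic
submodular (i.e. of supermodular width at most `d`) is pointwise
`(d+1)·H_{⌈m/(d+1)⌉}`-approximated by CH-`(d+1)`: for every `S` there is a CH-`(d+1)`
function `g` with `(d+1)·H_{⌈m/(d+1)⌉}·g(S) ≥ f(S)` and `g(T) ≤ f(T)` for all `T`. -/
theorem sm_superadditive_pointwise_approx_by_ch (d : ℕ)
    (hm : 1 ≤ Fintype.card α) (f : Finset α → ℝ)
    (hnorm : f ∅ = 0) (hmono : ∀ S T : Finset α, S ⊆ T → f S ≤ f T)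
    (hsuperadd : ∀ S T : Finset α, Disjoint S T → f S + f T ≤ f (S ∪ T))
    (hscopic : ScopicSubmodular d f) :
    ∀ S : Finset α, ∃ g : Finset α → ℝ, CH (d + 1) g ∧
      f S ≤ ((d : ℝ) + 1) * harmonic' ⌈(Fintype.card α : ℝ) / ((d : ℝ) + 1)⌉₊ * g S ∧
      ∀ T : Finset α, g T ≤ f T :=
  sm_superadditive_pointwise_approx_by_ch_general d f hnorm hmono hsuperadd hscopic
end

section
/- Let X be a finite ground set, let d ≥ 0 be an integer, and let f be a normalized monotone set function on X that is d-scopic submodular (equivalently, of supermodular width at most d). Let Q_1, …, Q_q be a partition of X obtained greedily: for each j, |Q_j| ≤ d + 1 and f(Q_j) ≥ f(Q′) for every Q′ ⊆ X ∖ (Q_1 ∪ … ∪ Q_{j−1}) with |Q′| ≤ d + 1. Then f(X) ≤ (d + 1) · Σ_{j=1}^{q} f(Q_j). -/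
variable {α : Type*} [Fintype α] [DecidableEq α]

/-- if `f` is normalized, monotone and `d`-scopic submodular, and
`Q_1, …, Q_q` is a greedy partition of `X` into batches of size at most `d + 1`
(each `Q_j` maximizing `f` among subsets of the remaining items of size at most `d + 1`),
then `f(X) ≤ (d + 1) · Σ_j f(Q_j)`. -/
theorem greedy_partition_bound_sm (f : Finset α → ℝ)
    (hnorm : f ∅ = 0) (hmono : ∀ S T : Finset α, S ⊆ T → f S ≤ f T)
    (d : ℕ) (hscopic : ScopicSubmodular d f)
    (q : ℕ) (Q : ℕ → Finset α)
    (hQcard : ∀ j, 1 ≤ j → j ≤ q → (Q j).card ≤ d + 1)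
    (hdisj : ∀ j j', 1 ≤ j → j ≤ q → 1 ≤ j' → j' ≤ q → j ≠ j' →
      Disjoint (Q j) (Q j'))
    (hcover : (Finset.Icc 1 q).biUnion Q = Finset.univ)
    (hgreedy : ∀ j, 1 ≤ j → j ≤ q → ∀ Q' : Finset α,
      Q' ⊆ Finset.univ \ (Finset.Ico 1 j).biUnion Q → Q'.card ≤ d + 1 →
      f Q' ≤ f (Q j)) :
    f Finset.univ ≤ ((d : ℝ) + 1) * ∑ j ∈ Finset.Icc 1 q, f (Q j) := by
  have hf0 : ∀ S : Finset α, 0 ≤ f S := fun S => hnorm ▸ hmono ∅ S (Finset.empty_subset S)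
  -- inner lemma: adding a set A (with A ∪ B inside the remaining items at step j)
  -- increases f by at most |A| · f(Q j)
  have step : ∀ j, 1 ≤ j → j ≤ q → ∀ A B : Finset α,
      A ∪ B ⊆ Finset.univ \ (Finset.Ico 1 j).biUnion Q →
      f (A ∪ B) ≤ f B + (A.card : ℝ) * f (Q j) := by
    intro j hj1 hjq A
    induction A using Finset.induction with
    | empty =>
      intro B _
      simp
    | @insert a A ha ih =>
      intro B hsub
      have hAB : A ∪ B ⊆ insert a A ∪ B := by
        apply Finset.union_subset_union_left
        exact Finset.subset_insert a A
      have hQj0 : 0 ≤ f (Q j) := hf0 (Q j)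
      have hcard : ((insert a A).card : ℝ) = (A.card : ℝ) + 1 := by
        rw [Finset.card_insert_of_notMem ha]; push_cast; ring
      by_cases haB : a ∈ B
      · have heq : insert a A ∪ B = A ∪ B := by
          rw [Finset.insert_union, Finset.insert_eq_self]
          exact Finset.mem_union_right A haB
        rw [heq]
        have := ih B (fun x hx => hsub (hAB hx))
        nlinarith [hf0 (Q j)]
      · have haAB : a ∉ A ∪ B := by
          simp only [Finset.mem_union]
          tauto
        obtain ⟨T', hT's, hT'c, hm⟩ :=
          hscopic ∅ (A ∪ B) (Finset.empty_subset _) a haAB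
        -- bound the margin of a
        have hTQ : f ({a} ∪ (∅ ∪ T')) ≤ f (Q j) := by
          apply hgreedy j hj1 hjq
          · intro x hx
            simp only [Finset.empty_union, Finset.mem_union, Finset.mem_singleton] at hx
            rcases hx with h | hx
            · rw [h]
              exact hsub (Finset.mem_union_left B (Finset.mem_insert_self a A))
            · exact hsub (hAB (hT's hx))
          · calc ({a} ∪ (∅ ∪ T')).card ≤ ({a} : Finset α).card + (∅ ∪ T').card :=
                  Finset.card_union_le _ _
              _ ≤ 1 + d := by
                  simp only [Finset.card_singleton, Finset.empty_union]
                  omega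
              _ = d + 1 := by omega
        have hmarg : margin f {a} (A ∪ B) ≤ f (Q j) := by
          refine hm.trans ?_
          have := hf0 (∅ ∪ T')
          unfold margin
          linarith
        have hiab : insert a A ∪ B = {a} ∪ (A ∪ B) := by
          rw [Finset.insert_union, Finset.insert_eq]
        have hmm : f (insert a A ∪ B) = margin f {a} (A ∪ B) + f (A ∪ B) := by
          rw [hiab]; unfold margin; ring
        have hih := ih B (fun x hx => hsub (hAB hx))
        rw [hmm, hcard]
        nlinarith
  -- suffix bound by downward induction
  have suffix : ∀ m, m ≤ q →
      f ((Finset.Icc (q - m + 1) q).biUnion Q) ≤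
        ((d : ℝ) + 1) * ∑ j ∈ Finset.Icc (q - m + 1) q, f (Q j) := by
    intro m
    induction m with
    | zero =>
      intro _
      have h : Finset.Icc (q - 0 + 1) q = (∅ : Finset ℕ) := by
        apply Finset.Icc_eq_empty
        omega
      rw [h]
      simp [hnorm]
    | succ m ih =>
      intro hmq
      set j := q - (m + 1) + 1 with hj
      have hj1 : 1 ≤ j := by omega
      have hjq : j ≤ q := by omega
      have hjm : j + 1 = q - m + 1 := by omega
      have hicc : Finset.Icc j q = insert j (Finset.Icc (j + 1) q) := by
        ext x
        simp only [Finset.mem_Icc, Finset.mem_insert]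
        omega
      have hjnot : j ∉ Finset.Icc (j + 1) q := by
        simp only [Finset.mem_Icc]
        omega
      set S := (Finset.Icc (j + 1) q).biUnion Q with hS
      have hbu : (Finset.Icc j q).biUnion Q = Q j ∪ S := by
        rw [hicc, Finset.biUnion_insert]
      have hrem : Q j ∪ S ⊆ Finset.univ \ (Finset.Ico 1 j).biUnion Q := by
        intro x hx
        simp only [Finset.mem_sdiff, Finset.mem_univ, true_and, Finset.mem_biUnion,
          Finset.mem_Ico, not_exists, not_and]
        intro i hi hx'
        -- x belongs to some Q j' with j ≤ j' ≤ q
        have hx2 : ∃ j', j ≤ j' ∧ j' ≤ q ∧ x ∈ Q j' := by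
          rcases Finset.mem_union.mp hx with h | h
          · exact ⟨j, le_refl j, hjq, h⟩
          · rcases Finset.mem_biUnion.mp h with ⟨j', hj', hxj'⟩
            simp only [Finset.mem_Icc] at hj'
            exact ⟨j', by omega, hj'.2, hxj'⟩
        obtain ⟨j', hjj', hj'q, hxj'⟩ := hx2
        have hne : i ≠ j' := by omega
        have := hdisj i j' hi.1 (by omega) (by omega) hj'q hne
        exact (Finset.disjoint_left.mp this hx') hxj'
      have hst := step j hj1 hjq (Q j) S hrem
      have hihm := ih (by omega)
      rw [← hjm] at hihm
      have hsum : ∑ i ∈ Finset.Icc j q, f (Q i) =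
          f (Q j) + ∑ i ∈ Finset.Icc (j + 1) q, f (Q i) := by
        rw [hicc, Finset.sum_insert hjnot]
      have hihm' : f S ≤ ((d : ℝ) + 1) * ∑ i ∈ Finset.Icc (j + 1) q, f (Q i) := hihm
      have hcard : ((Q j).card : ℝ) ≤ (d : ℝ) + 1 := by
        have := hQcard j hj1 hjq
        exact_mod_cast this
      have hQj0 : 0 ≤ f (Q j) := hf0 (Q j)
      have hbd : f (Q j ∪ S) ≤ f S + ((d : ℝ) + 1) * f (Q j) := by
        nlinarith
      rw [hbu, hsum]
      nlinarith
  have h1 := suffix q (le_refl q)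
  have : q - q + 1 = 1 := by omega
  rw [this, hcover] at h1
  exact h1
end

section
/- Let X be a finite ground set, let d ≥ 1 be an integer, and let f be a normalized monotone set function on X that is d-scopic subadditive (equivalently, of superadditive width at most d). Let Q_1, …, Q_q be a partition of X obtained greedily: for each j, |Q_j| ≤ 2d and f(Q_j) ≥ f(Q′) for every Q′ ⊆ X ∖ (Q_1 ∪ … ∪ Q_{j−1}) with |Q′| ≤ 2d. Let T_1, …, T_t be a partition of X such that each T_i is a union of some of the sets Q_j, indexed so that the smallest index j with Q_j ⊆ T_i is strictly increasing in i. Then f(X) ≤ 2 · Σ_{i=1}^{t} f(T_i). -/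
variable {α : Type*} [Fintype α] [DecidableEq α]

/-- let `f` be normalized, monotone and `d`-scopic subadditive (`d ≥ 1`),
`Q_1, …, Q_q` a greedy partition of `X` into batches of size at most `2d` (each `Q_j`
maximizing `f` among subsets of the remaining items of size at most `2d`), and
`T_1, …, T_t` a partition of `X` where each `T_i = ⋃_{j ∈ J_i} Q_j` is a union of `Q`'s,
indexed so that the smallest index `j` with `Q_j ⊆ T_i` is strictly increasing in `i`
(formalized: every index in `J_{i'}` exceeds some index in `J_i` whenever `i < i'`).
Then `f(X) ≤ 2 · Σ_i f(T_i)`. -/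
theorem greedy_partition_regrouped_bound_sa (f : Finset α → ℝ)
    (hnorm : f ∅ = 0) (hmono : ∀ S T : Finset α, S ⊆ T → f S ≤ f T)
    (d : ℕ) (hd : 1 ≤ d) (hscopic : ScopicSubadditive d f)
    (q : ℕ) (Q : ℕ → Finset α)
    (hQcard : ∀ j, 1 ≤ j → j ≤ q → (Q j).card ≤ 2 * d)
    (hQdisj : ∀ j j', 1 ≤ j → j ≤ q → 1 ≤ j' → j' ≤ q → j ≠ j' →
      Disjoint (Q j) (Q j'))
    (hQcover : (Finset.Icc 1 q).biUnion Q = Finset.univ)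
    (hgreedy : ∀ j, 1 ≤ j → j ≤ q → ∀ Q' : Finset α,
      Q' ⊆ Finset.univ \ (Finset.Ico 1 j).biUnion Q → Q'.card ≤ 2 * d →
      f Q' ≤ f (Q j))
    (t : ℕ) (T : ℕ → Finset α) (J : ℕ → Finset ℕ)
    (hJ : ∀ i, 1 ≤ i → i ≤ t → J i ⊆ Finset.Icc 1 q ∧ (J i).Nonempty ∧
      T i = (J i).biUnion Q)
    (hTdisj : ∀ i i', 1 ≤ i → i ≤ t → 1 ≤ i' → i' ≤ t → i ≠ i' →
      Disjoint (T i) (T i'))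
    (hTcover : (Finset.Icc 1 t).biUnion T = Finset.univ)
    (hminmono : ∀ i i', 1 ≤ i → i < i' → i' ≤ t →
      ∀ j' ∈ J i', ∃ j ∈ J i, j < j') :
    f Finset.univ ≤ 2 * ∑ i ∈ Finset.Icc 1 t, f (T i) := by
  classical
  have hpos : ∀ S : Finset α, 0 ≤ f S := fun S => hnorm ▸ hmono ∅ S (Finset.empty_subset S)
  set U : ℕ → Finset α := fun i => (Finset.Icc i t).biUnion T with hUdef
  have hU1 : U 1 = Finset.univ := hTcover
  have hUt : U (t + 1) = ∅ := by
    simp only [hUdef]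
    rw [Finset.Icc_eq_empty (by omega), Finset.biUnion_empty]
  -- per-term bound
  have key : ∀ i, 1 ≤ i → i ≤ t → f (U i) - f (U (i + 1)) ≤ 2 * f (T i) := by
    intro i hi1 hit
    obtain ⟨hJsub, hJne, hTi⟩ := hJ i hi1 hit
    set j₀ := (J i).min' hJne with hj0def
    have hj0mem : j₀ ∈ J i := (J i).min'_mem hJne
    have hq0 := Finset.mem_Icc.mp (hJsub hj0mem)
    -- U i = T i ∪ U (i+1)
    have hUsplit : U i = T i ∪ U (i + 1) := by
      have h : Finset.Icc i t = insert i (Finset.Icc (i + 1) t) := by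
        ext x; simp only [Finset.mem_Icc, Finset.mem_insert]; omega
      simp only [hUdef]
      rw [h, Finset.biUnion_insert]
    -- disjointness of T i and the later suffix
    have hdisj : Disjoint (T i) (U (i + 1)) := by
      rw [hUdef, Finset.disjoint_biUnion_right]
      intro i' hi'
      rw [Finset.mem_Icc] at hi'
      exact hTdisj i i' hi1 hit (by omega) hi'.2 (by omega)
    -- elements of U (i+1) avoid all Q j'' with j'' < j₀
    have hrest : ∀ x ∈ U (i + 1), ∀ j'' ∈ Finset.Ico 1 j₀, x ∉ Q j'' := by
      intro x hx j'' hj''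
      obtain ⟨i', hi', hxT⟩ := Finset.mem_biUnion.mp hx
      rw [Finset.mem_Icc] at hi'
      obtain ⟨hJ'sub, hJ'ne, hT'⟩ := hJ i' (by omega) hi'.2
      rw [hT'] at hxT
      obtain ⟨j', hj'mem, hxQ⟩ := Finset.mem_biUnion.mp hxT
      obtain ⟨j, hjJ, hjlt⟩ := hminmono i i' hi1 (by omega) hi'.2 j' hj'mem
      have hj0le : j₀ ≤ j := (J i).min'_le j hjJ
      rw [Finset.mem_Ico] at hj''
      have hj'q := Finset.mem_Icc.mp (hJ'sub hj'mem)
      intro hxQ''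
      exact Finset.disjoint_left.mp
        (hQdisj j'' j' hj''.1 (by omega) hj'q.1 hj'q.2 (by omega)) hxQ'' hxQ
    -- scopic subadditivity, twice
    obtain ⟨T', hT'sub, hT'card, hm1⟩ := hscopic (T i) (U (i + 1)) hdisj
    have hdisj2 : Disjoint T' (T i) := (hdisj.symm.mono_left hT'sub)
    obtain ⟨T'', hT''sub, hT''card, hm2⟩ := hscopic T' (T i) hdisj2
    -- the union T' ∪ T'' avoids everything before Q j₀
    have hA : T' ∪ T'' ⊆ Finset.univ \ (Finset.Ico 1 j₀).biUnion Q := by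
      intro x hx
      rw [Finset.mem_sdiff]
      refine ⟨Finset.mem_univ x, fun hxB => ?_⟩
      obtain ⟨j'', hj''mem, hxQ⟩ := Finset.mem_biUnion.mp hxB
      rcases Finset.mem_union.mp hx with hx' | hx''
      · exact hrest x (hT'sub hx') j'' hj''mem hxQ
      · have hxT := hT''sub hx''
        rw [hTi] at hxT
        obtain ⟨j, hjJ, hxQj⟩ := Finset.mem_biUnion.mp hxT
        have hj0le : j₀ ≤ j := (J i).min'_le j hjJ
        rw [Finset.mem_Ico] at hj''mem
        have hjq := Finset.mem_Icc.mp (hJsub hjJ)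
        exact Finset.disjoint_left.mp
          (hQdisj j'' j hj''mem.1 (by omega) hjq.1 hjq.2 (by omega)) hxQ hxQj
    -- greedy bound
    have hgA : f (T' ∪ T'') ≤ f (Q j₀) :=
      hgreedy j₀ hq0.1 hq0.2 _ hA
        (le_trans (Finset.card_union_le _ _) (by omega))
    have hQsub : f (Q j₀) ≤ f (T i) := by
      apply hmono
      rw [hTi]
      exact Finset.subset_biUnion_of_mem Q hj0mem
    -- combine
    have hcomm : f (T i ∪ T') = f (T' ∪ T i) := by rw [Finset.union_comm]
    simp only [margin] at hm1 hm2
    rw [hUsplit]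
    have h1 : 0 ≤ f T' := hpos T'
    have h2 : 0 ≤ f T'' := hpos T''
    linarith
  -- telescoping
  have tele : ∀ n : ℕ, ∑ i ∈ Finset.Icc 1 n, (f (U i) - f (U (i + 1)))
      = f (U 1) - f (U (n + 1)) := by
    intro n
    induction n with
    | zero => simp
    | succ n ih =>
      rw [Finset.sum_Icc_succ_top (Nat.succ_le_succ (Nat.zero_le n)), ih]
      ring
  have htel : f Finset.univ = ∑ i ∈ Finset.Icc 1 t, (f (U i) - f (U (i + 1))) := by
    rw [tele t, hU1, hUt, hnorm, sub_zero]
  rw [htel, Finset.mul_sum]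
  apply Finset.sum_le_sum
  intro i hi
  rw [Finset.mem_Icc] at hi
  exact key i hi.1 hi.2
end
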